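/- arXiv:2108.09177 — 8 statements merged into one kernel-verified Lean document; each statement's English description precedes it below -/
import Mathlib

section
/- Let a_1, …, a_M be points in ℝ² (the BSs) with M ≥ 2K+1, such that no three BSs are collinear. Let X ⊆ ℝ² be any set of K target points. Then no ghost configuration exists: every set X^G ⊆ ℝ² with |X^G| = K satisfying D_m(X^G) = D_m(X) for every m = 1, …, M must equal X. -/
noncomputable section

/-- The Euclidean plane ℝ². -/
abbrev Plane := EuclideanSpace ℝ (Fin 2)

/-- The range set of a BS located at `a` with respect to a target set `X`:
the set of distances from `a` to the points of `X`. -/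
def rangeSet (a : Plane) (X : Set Plane) : Set ℝ := (fun p => dist a p) '' X

open scoped Classical in
open AffineSubspace in
lemma collinear_perpBisector_aux (p q : Plane) (hpq : p ≠ q) :
    Collinear ℝ ((perpBisector p q : AffineSubspace ℝ Plane) : Set Plane) := by
  rw [collinear_iff_rank_le_one]
  have hv : vectorSpan ℝ ((perpBisector p q : AffineSubspace ℝ Plane) : Set Plane)
      = (perpBisector p q).direction := rfl
  rw [hv, direction_perpBisector]
  have h1 : Module.finrank ℝ (ℝ ∙ (q -ᵥ p)) = 1 := by
    rw [finrank_span_singleton (by simpa [sub_eq_zero] using (sub_ne_zero.mpr (hpq.symm)))]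
  have := Submodule.finrank_add_finrank_orthogonal (𝕜 := ℝ) (E := Plane) (ℝ ∙ (q -ᵥ p))
  have hdim : Module.finrank ℝ Plane = 2 := by simp [finrank_euclideanSpace]
  have h2 : Module.finrank ℝ ((ℝ ∙ (q -ᵥ p))ᗮ) = 1 := by omega
  rw [← Module.finrank_eq_rank, h2]
  norm_num

/-- **Theorem 1.** If `M ≥ 2K+1` and no three BSs are collinear, then for any set `X`
of `K` targets, no ghost configuration exists: every `K`-element set `X^G` with the
same range set as `X` at every BS must equal `X`. -/
theorem no_ghost_of_many_BS (M K : ℕ) (hM : 2 * K + 1 ≤ M)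
    (a : Fin M → Plane)
    (hcol : ∀ i j k : Fin M, i ≠ j → i ≠ k → j ≠ k →
      ¬ Collinear ℝ ({a i, a j, a k} : Set Plane))
    (X : Set Plane) (hXfin : X.Finite) (hXcard : X.ncard = K)
    (XG : Set Plane) (hGfin : XG.Finite) (hGcard : XG.ncard = K)
    (hranges : ∀ m : Fin M, rangeSet (a m) XG = rangeSet (a m) X) :
    XG = X := by
  classical
  by_contra hne
  -- there is a point of XG not in X
  have hnotsub : ¬ XG ⊆ X := by
    intro hsub
    exact hne (Set.eq_of_subset_of_ncard_le hsub (by omega) hXfin)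
  obtain ⟨p, hpG, hpX⟩ := Set.not_subset.mp hnotsub
  -- for each BS, a matching point of X at the same distance
  have hmatch : ∀ m : Fin M, ∃ q ∈ X, dist (a m) q = dist (a m) p := by
    intro m
    have : dist (a m) p ∈ rangeSet (a m) X := by
      rw [← hranges m]; exact ⟨p, hpG, rfl⟩
    obtain ⟨q, hqX, hq⟩ := this
    exact ⟨q, hqX, hq⟩
  choose q hqX hqd using hmatch
  -- pigeonhole: some q-value is hit by at least 3 BSs
  have hmaps : ∀ m ∈ (Finset.univ : Finset (Fin M)), q m ∈ hXfin.toFinset := by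
    intro m _; exact hXfin.mem_toFinset.mpr (hqX m)
  have hcard : hXfin.toFinset.card * 2 < (Finset.univ : Finset (Fin M)).card := by
    have : hXfin.toFinset.card = K := by rw [← hXcard, Set.ncard_eq_toFinset_card X hXfin]
    simp [this]
    omega
  obtain ⟨b, _, hb⟩ :=
    Finset.exists_lt_card_fiber_of_mul_lt_card_of_maps_to hmaps hcard
  have h3 : 3 ≤ (Finset.univ.filter fun m => q m = b).card := hb
  obtain ⟨s, hs, hscard⟩ := Finset.exists_subset_card_eq h3
  obtain ⟨i, j, k, hij, hik, hjk, rfl⟩ := Finset.card_eq_three.mp hscard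
  have hqi : q i = b := (Finset.mem_filter.mp (hs (by simp))).2
  have hqj : q j = b := (Finset.mem_filter.mp (hs (by simp))).2
  have hqk : q k = b := (Finset.mem_filter.mp (hs (by simp))).2
  have hbX : b ∈ X := hqi ▸ hqX i
  have hbp : b ≠ p := fun h => hpX (h ▸ hbX)
  -- the three BSs lie on the perpendicular bisector of b and p
  have hmem : ∀ m : Fin M, q m = b → a m ∈ AffineSubspace.perpBisector b p := by
    intro m hm
    rw [AffineSubspace.mem_perpBisector_iff_dist_eq]
    rw [← hm]
    exact hqd m
  refine hcol i j k hij hik hjk ((collinear_perpBisector_aux b p hbp).subset ?_)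
  intro x hx
  rcases hx with h | h | h <;> subst h
  · exact hmem i hqi
  · exact hmem j hqj
  · exact hmem k hqk
end
end

section
/- Let a_1, …, a_M be points in ℝ² (the BSs) with M ≥ 4, such that no three BSs are collinear, and let K ≥ 1 be a fixed number of targets. Then the set of tuples (p_1, …, p_K) ∈ (ℝ²)^K whose entries are pairwise distinct and whose target set X = {p_1, …, p_K} admits a ghost configuration has Lebesgue measure zero in (ℝ²)^K ≅ ℝ^{2K}. Consequently, if the K targets are located independently and uniformly at random in a bounded region of positive area, ghost targets do not exist almost surely. -/
open MeasureTheory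

noncomputable section

/-!
Since `M ≥ 4`, the stations satisfy a nontrivial affine relation `∑ cᵢ aᵢ = 0`, `∑ cᵢ = 0`, so
`∑ cᵢ ‖aᵢ - y‖²` takes the same value at every `y`. A ghost point `x ∉ X` is matched by every
station `i` with a target `p (σ i)` at the same distance, hence the targets satisfy
`∑ cᵢ ‖aᵢ - p (σ i)‖² = const` for one of finitely many maps `σ`. Pick `j` with `cⱼ ≠ 0`. The
stations matched with the same target as station `j` are equidistant from it and from `x`, so
they lie on a line and there are at most two of them; as a function of the position of that
target alone, the equation is then that of a circle or a line, a null set, and Fubini's theorem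
makes the whole solution set null.
-/

open RealInnerProductSpace Function

section Quadric

variable {E : Type*} [NormedAddCommGroup E] [InnerProductSpace ℝ E] [FiniteDimensional ℝ E]
  [MeasurableSpace E] [BorelSpace E] (μ : Measure E) [μ.IsAddHaarMeasure]

theorem addHaar_setOf_inner_eq {w : E} (hw : w ≠ 0) (α : ℝ) : μ {y | ⟪w, y⟫ = α} = 0 := by
  rcases Set.eq_empty_or_nonempty {y | ⟪w, y⟫ = α} with h | ⟨y₀, hy₀⟩
  · simp [h]
  refine measure_mono_null (fun y hy => ?_)
    (Measure.addHaar_affineSubspace μ (AffineSubspace.mk' y₀ (ℝ ∙ w)ᗮ) fun h => hw ?_)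
  · rw [SetLike.mem_coe, AffineSubspace.mem_mk', vsub_eq_sub,
      Submodule.mem_orthogonal_singleton_iff_inner_right, inner_sub_right]
    exact sub_eq_zero.mpr (hy.trans hy₀.symm)
  · have := congrArg AffineSubspace.direction h
    rwa [AffineSubspace.direction_mk', AffineSubspace.direction_top,
      Submodule.orthogonal_eq_top_iff, Submodule.span_singleton_eq_bot] at this

theorem addHaar_setOf_quadratic_eq [Nontrivial E] {β : ℝ} {w : E} (h : β ≠ 0 ∨ w ≠ 0) (α : ℝ) :
    μ {y | β * ‖y‖ ^ 2 + ⟪w, y⟫ = α} = 0 := by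
  rcases eq_or_ne β 0 with rfl | hβ
  · simpa using addHaar_setOf_inner_eq μ (h.resolve_left (not_not.mpr rfl)) α
  set z : E := -(2 * β)⁻¹ • w
  refine measure_mono_null (fun y hy => ?_)
    (Measure.addHaar_sphere μ z √(α / β + ‖z‖ ^ 2))
  have hsq : ‖y - z‖ ^ 2 = α / β + ‖z‖ ^ 2 := by
    rw [norm_sub_sq_real, real_inner_smul_right, real_inner_comm, ← hy.out]
    field_simp
    ring
  rw [Metric.mem_sphere, dist_eq_norm, ← hsq, Real.sqrt_sq (norm_nonneg _)]

end Quadric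

theorem sum_mul_norm_sub_sq {E : Type*} [NormedAddCommGroup E] [InnerProductSpace ℝ E]
    {ι : Type*} (s : Finset ι) (c : ι → ℝ) (b : ι → E) (y : E) :
    ∑ i ∈ s, c i * ‖b i - y‖ ^ 2 =
      (∑ i ∈ s, c i) * ‖y‖ ^ 2 - 2 * ⟪∑ i ∈ s, c i • b i, y⟫ + ∑ i ∈ s, c i * ‖b i‖ ^ 2 := by
  simp only [norm_sub_sq_real, sum_inner, real_inner_smul_left, Finset.sum_mul, Finset.mul_sum,
    mul_add, mul_sub, ← Finset.sum_add_distrib, ← Finset.sum_sub_distrib]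
  exact Finset.sum_congr rfl fun i _ => by ring

theorem sum_mul_dist_sq_eq_of_affine_relation {E ι : Type*} [NormedAddCommGroup E]
    [InnerProductSpace ℝ E] [Fintype ι] {b : ι → E} {c : ι → ℝ} (hsum : ∑ i, c i = 0)
    (hsmul : ∑ i, c i • b i = 0) (y : E) :
    ∑ i, c i * dist (b i) y ^ 2 = ∑ i, c i * ‖b i‖ ^ 2 := by
  simp_rw [dist_eq_norm, sum_mul_norm_sub_sq, hsum, hsmul, inner_zero_left]
  ring

theorem exists_nontrivial_affine_relation {ι V : Type*} [Fintype ι] [AddCommGroup V] [Module ℝ V]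
    [FiniteDimensional ℝ V] {b : ι → V} (hι : Module.finrank ℝ V + 1 < Fintype.card ι) :
    ∃ c : ι → ℝ, ∑ i, c i = 0 ∧ ∑ i, c i • b i = 0 ∧ ∃ j, c j ≠ 0 := by
  have hb : ¬ AffineIndependent ℝ b := fun h =>
    (h.card_le_finrank_succ.trans (Nat.succ_le_succ (Submodule.finrank_le _))).not_gt hι
  simp only [affineIndependent_iff_of_fintype, not_forall] at hb
  obtain ⟨c, hsum, hvsub, j, hj⟩ := hb
  refine ⟨c, hsum, ?_, j, hj⟩
  simpa [Finset.weightedVSub_eq_weightedVSubOfPoint_of_sum_eq_zero _ _ _ hsum (0 : V),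
    Finset.weightedVSubOfPoint_apply] using hvsub

theorem sum_ne_zero_or_sum_smul_ne_zero_of_card_le_two {ι V : Type*} [AddCommGroup V]
    [Module ℝ V] {s : Finset ι} (hs : s.card ≤ 2) {b : ι → V} (hb : Set.InjOn b s) {c : ι → ℝ}
    {j : ι} (hj : j ∈ s) (hcj : c j ≠ 0) :
    ∑ i ∈ s, c i ≠ 0 ∨ ∑ i ∈ s, c i • b i ≠ 0 := by
  classical
  by_contra! ⟨hsum, hsmul⟩
  rw [← Finset.add_sum_erase s _ hj] at hsum hsmul
  have : Nonempty ι := ⟨j⟩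
  obtain ⟨i, hi⟩ : ∃ i, s.erase j ⊆ {i} := by
    refine Finset.card_le_one_iff_subset_singleton.mp ?_
    rw [Finset.card_erase_of_mem hj]
    omega
  rcases Finset.subset_singleton_iff.mp hi with he | he
  · simp [he, hcj] at hsum
  · have his : i ∈ s := Finset.mem_of_mem_erase (he ▸ Finset.mem_singleton_self i)
    have hij : i ≠ j := Finset.ne_of_mem_erase (he ▸ Finset.mem_singleton_self i)
    rw [he, Finset.sum_singleton] at hsum hsmul
    rw [show c i = -c j by linarith, neg_smul, ← sub_eq_add_neg, ← smul_sub,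
      smul_eq_zero, sub_eq_zero] at hsmul
    exact hij (hb his hj (hsmul.resolve_left hcj).symm)

theorem pi_null_of_forall_slice_null {δ : Type*} [Fintype δ] [DecidableEq δ] {X : δ → Type*}
    [∀ i, MeasurableSpace (X i)] (μ : ∀ i, Measure (X i)) [∀ i, SigmaFinite (μ i)]
    {s : Set (∀ i, X i)} (hs : MeasurableSet s) (k : δ)
    (h : ∀ x, μ k {y | update x k y ∈ s} = 0) : Measure.pi μ s = 0 := by
  rcases isEmpty_or_nonempty (∀ i, X i) with _ | ⟨⟨x⟩⟩
  · exact Subsingleton.elim s ∅ ▸ measure_empty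
  have hf : Measurable (s.indicator 1 : (∀ i, X i) → ENNReal) := measurable_one.indicator hs
  rw [← lintegral_indicator_one hs, lintegral_eq_lmarginal_univ x,
    lmarginal_erase' _ hf (Finset.mem_univ k)]
  have hslice (x) : ∫⁻ y, s.indicator 1 (update x k y) ∂μ k = 0 := by
    rw [← h x]
    exact lintegral_indicator_one (hs.preimage (measurable_update x))
  simp only [lmarginal, hslice, lintegral_zero]

theorem pi_setOf_sum_mul_dist_sq_eq_null {E : Type*} [NormedAddCommGroup E]
    [InnerProductSpace ℝ E] [FiniteDimensional ℝ E] [Nontrivial E] [MeasurableSpace E]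
    [BorelSpace E] (μ : Measure E) [μ.IsAddHaarMeasure] {ι κ : Type*} [Fintype ι] [Fintype κ]
    [DecidableEq κ] (b : ι → E) (c : ι → ℝ) (σ : ι → κ) (C : ℝ) (k : κ)
    (hk : ∑ i with σ i = k, c i ≠ 0 ∨ ∑ i with σ i = k, c i • b i ≠ 0) :
    Measure.pi (fun _ : κ => μ) {p | ∑ i, c i * dist (b i) (p (σ i)) ^ 2 = C} = 0 := by
  refine pi_null_of_forall_slice_null _
    (measurableSet_eq_fun (by fun_prop) measurable_const) k fun q => ?_
  have hslice (y : E) : ∑ i, c i * dist (b i) (update q k y (σ i)) ^ 2 =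
      ∑ i with σ i = k, c i * ‖b i - y‖ ^ 2 +
        ∑ i with σ i ≠ k, c i * dist (b i) (q (σ i)) ^ 2 := by
    rw [← Finset.sum_filter_add_sum_filter_not _ (σ · = k)]
    congr 1 <;> refine Finset.sum_congr rfl fun i hi => ?_
    · rw [(Finset.mem_filter.mp hi).2, update_self, dist_eq_norm]
    · rw [update_of_ne (Finset.mem_filter.mp hi).2]
  refine measure_mono_null (fun y hy => ?_) (addHaar_setOf_quadratic_eq μ
    (hk.imp_right (smul_ne_zero (by norm_num : (-2 : ℝ) ≠ 0)))
    (C - ∑ i with σ i ≠ k, c i * dist (b i) (q (σ i)) ^ 2 - ∑ i with σ i = k, c i * ‖b i‖ ^ 2))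
  simp only [Set.mem_ofPred_eq, hslice, sum_mul_norm_sub_sq] at hy ⊢
  rw [real_inner_smul_left]
  linarith

section NoThreeCollinear

variable {ι P : Type*} [AddCommGroup P] [Module ℝ P] {b : ι → P}

theorem injective_of_forall_not_collinear [Fintype ι]
    (hb : ∀ i j k, i ≠ j → i ≠ k → j ≠ k → ¬ Collinear ℝ ({b i, b j, b k} : Set P))
    (hι : 3 ≤ Fintype.card ι) : Injective b := by
  classical
  intro i j hij
  by_contra hne
  obtain ⟨k, -, hk⟩ := Finset.exists_mem_notMem_of_card_lt_card
    (s := {i, j}) (t := Finset.univ) (Finset.card_le_two.trans_lt (by rw [Finset.card_univ]; omega))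
  simp only [Finset.mem_insert, Finset.mem_singleton, not_or] at hk
  refine hb i j k hne (Ne.symm hk.1) (Ne.symm hk.2) ?_
  simpa [hij] using collinear_pair ℝ (b j) (b k)

theorem card_le_two_of_collinear_image
    (hb : ∀ i j k, i ≠ j → i ≠ k → j ≠ k → ¬ Collinear ℝ ({b i, b j, b k} : Set P))
    {s : Finset ι} (hs : Collinear ℝ (b '' s)) :
    s.card ≤ 2 := by
  by_contra! h
  obtain ⟨i, hi, j, hj, k, hk, hij, hik, hjk⟩ := Finset.two_lt_card.mp h
  refine hb i j k hij hik hjk (hs.subset ?_)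
  rintro _ (rfl | rfl | rfl) <;> exact Set.mem_image_of_mem b ‹_›

end NoThreeCollinear

theorem collinear_perpBisector {E : Type*} [NormedAddCommGroup E] [InnerProductSpace ℝ E]
    [FiniteDimensional ℝ E] (hE : Module.finrank ℝ E ≤ 2) {x y : E} (hxy : x ≠ y) :
    Collinear ℝ (AffineSubspace.perpBisector x y : Set E) := by
  have hsum := Submodule.finrank_add_finrank_orthogonal (ℝ ∙ (y -ᵥ x))
  rw [finrank_span_singleton (vsub_ne_zero.mpr hxy.symm)] at hsum
  rw [collinear_iff_finrank_le_one, ← AffineSubspace.direction_eq_vectorSpan,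
    AffineSubspace.direction_perpBisector]
  omega

theorem card_le_two_of_forall_dist_eq {E ι : Type*} [NormedAddCommGroup E]
    [InnerProductSpace ℝ E] [FiniteDimensional ℝ E] (hE : Module.finrank ℝ E ≤ 2) {b : ι → E}
    (hb : ∀ i j k, i ≠ j → i ≠ k → j ≠ k → ¬ Collinear ℝ ({b i, b j, b k} : Set E))
    {x y : E} (hxy : x ≠ y) {s : Finset ι} (hs : ∀ i ∈ s, dist (b i) x = dist (b i) y) :
    s.card ≤ 2 := by
  refine card_le_two_of_collinear_image hb ((collinear_perpBisector hE hxy).subset ?_)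
  rintro _ ⟨i, hi, rfl⟩
  exact AffineSubspace.mem_perpBisector_iff_dist_eq.mpr (hs i hi)

theorem exists_mem_notMem_range_of_ncard_eq {α ι : Type*} [Finite ι] {p : ι → α}
    (hp : Injective p) {X : Set α} (hX : X.ncard = Nat.card ι) (hne : X ≠ Set.range p) :
    ∃ x ∈ X, x ∉ Set.range p := by
  by_contra! h
  refine hne (Set.eq_of_subset_of_ncard_le h ?_ (Set.finite_range p))
  rw [Set.ncard_range_of_injective hp, hX]

theorem ghost_targets_measure_zero_general (M K : ℕ) (hM : 4 ≤ M)
    (a : Fin M → Plane)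
    (hcol : ∀ i j k : Fin M, i ≠ j → i ≠ k → j ≠ k →
      ¬ Collinear ℝ ({a i, a j, a k} : Set Plane)) :
    volume {p : Fin K → Plane | Function.Injective p ∧
      ∃ XG : Set Plane, XG.Finite ∧ XG.ncard = K ∧ XG ≠ Set.range p ∧
        ∀ m : Fin M, rangeSet (a m) XG = rangeSet (a m) (Set.range p)} = 0 := by
  obtain ⟨c, hc_sum, hc_smul, j, hcj⟩ := exists_nontrivial_affine_relation (b := a)
    (by rw [finrank_euclideanSpace_fin, Fintype.card_fin]; omega)
  have ha : Injective a := injective_of_forall_not_collinear hcol (by rw [Fintype.card_fin]; omega)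
  refine measure_mono_null (fun p hp => ?_) (measure_iUnion_null fun σ =>
    measure_iUnion_null fun (hσ : (Finset.univ.filter (σ · = σ j)).card ≤ 2) =>
      pi_setOf_sum_mul_dist_sq_eq_null volume a c σ (∑ i, c i * ‖a i‖ ^ 2) (σ j)
        (sum_ne_zero_or_sum_smul_ne_zero_of_card_le_two hσ ha.injOn (by simp) hcj))
  obtain ⟨hp, XG, -, hcard, hne, hrange⟩ := hp
  obtain ⟨x, hxX, hxp⟩ := exists_mem_notMem_range_of_ncard_eq hp (by simpa using hcard) hne
  have hmatch (m : Fin M) : ∃ t, dist (a m) (p t) = dist (a m) x := by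
    obtain ⟨_, ⟨t, rfl⟩, ht⟩ := (hrange m).le ⟨x, hxX, rfl⟩
    exact ⟨t, ht⟩
  choose σ hσ using hmatch
  simp only [Set.mem_iUnion]
  refine ⟨σ, card_le_two_of_forall_dist_eq finrank_euclideanSpace_fin.le hcol
    (fun h => hxp ⟨σ j, h⟩) fun i hi => ?_, ?_⟩
  · rw [← (Finset.mem_filter.mp hi).2]
    exact hσ i
  · simp only [Set.mem_ofPred_eq, hσ, sum_mul_dist_sq_eq_of_affine_relation hc_sum hc_smul]

/-- **Theorem 2.** If `M ≥ 4` and no three BSs are collinear, then for any fixed number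
`K ≥ 1` of targets, the set of tuples of pairwise distinct target positions whose
target set admits a ghost configuration has Lebesgue measure zero in `(ℝ²)^K`. -/
theorem ghost_targets_measure_zero (M K : ℕ) (hM : 4 ≤ M) (hK : 1 ≤ K)
    (a : Fin M → Plane)
    (hcol : ∀ i j k : Fin M, i ≠ j → i ≠ k → j ≠ k →
      ¬ Collinear ℝ ({a i, a j, a k} : Set Plane)) :
    volume {p : Fin K → Plane | Function.Injective p ∧
      ∃ XG : Set Plane, XG.Finite ∧ XG.ncard = K ∧ XG ≠ Set.range p ∧
        ∀ m : Fin M, rangeSet (a m) XG = rangeSet (a m) (Set.range p)} = 0 :=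
  ghost_targets_measure_zero_general M K hM a hcol
end
end

section
/- Let a_1, a_2, a_3, a_4 be four points in ℝ² (the BSs), no three of which are collinear. Suppose that for every partition of {1,2,3,4} into two pairs {i,j} and {k,l}, the line through a_i and a_j is NOT perpendicular to the line through a_k and a_l. Then for any set X ⊆ ℝ² of K = 2 targets, no ghost configuration exists: every set X^G ⊆ ℝ² with |X^G| = 2 and D_m(X^G) = D_m(X) for m = 1,2,3,4 must equal X. -/
noncomputable section

/-!
Let `X = {x₁, x₂}` and `X^G = {y₁, y₂}`. Adding the two range equations of a BS `a` gives
`2⟪a, (y₁ + y₂) - (x₁ + x₂)⟫ = ‖y₁‖² + ‖y₂‖² - ‖x₁‖² - ‖x₂‖²`, so unless `y₁ + y₂ = x₁ + x₂` all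
BSs lie on one line. Equal sums, and then equal sums of squared norms, put `y₁` on the circle with
diameter `x₁x₂` (Thales). If `y₁ ∉ {x₁, x₂}`, every BS lies on the perpendicular bisector of
`x₁y₁` or on that of `x₂y₁`; these two lines are perpendicular, and as no three BSs are collinear
each of them carries exactly two BSs, which is a perpendicular partition.
-/

open Module Finset
open scoped RealInnerProductSpace

lemma Fin.exists_pair_partition_of_forall_or {P Q : Fin 4 → Prop} (hPQ : ∀ m, P m ∨ Q m)
    (hP : ¬∃ i j k, i ≠ j ∧ i ≠ k ∧ j ≠ k ∧ P i ∧ P j ∧ P k)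
    (hQ : ¬∃ i j k, i ≠ j ∧ i ≠ k ∧ j ≠ k ∧ Q i ∧ Q j ∧ Q k) :
    ∃ i j k l, ({i, j, k, l} : Finset (Fin 4)) = univ ∧ P i ∧ P j ∧ Q k ∧ Q l := by
  classical
  have hS : #(univ.filter P) ≤ 2 := by
    by_contra! h
    obtain ⟨i, j, k, hi, hj, hk, hij, hik, hjk⟩ := two_lt_card_iff.mp h
    simp only [mem_filter, mem_univ, true_and] at hi hj hk
    exact hP ⟨i, j, k, hij, hik, hjk, hi, hj, hk⟩
  have hT : #(univ.filter (¬P ·)) ≤ 2 := by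
    by_contra! h
    obtain ⟨i, j, k, hi, hj, hk, hij, hik, hjk⟩ := two_lt_card_iff.mp h
    simp only [mem_filter, mem_univ, true_and] at hi hj hk
    exact hQ ⟨i, j, k, hij, hik, hjk, (hPQ i).resolve_left hi, (hPQ j).resolve_left hj,
      (hPQ k).resolve_left hk⟩
  have hcard := card_filter_add_card_filter_not (s := (univ : Finset (Fin 4))) P
  rw [card_univ, Fintype.card_fin] at hcard
  obtain ⟨i, j, -, hSij⟩ := card_eq_two.mp (show #(univ.filter P) = 2 by omega)
  obtain ⟨k, l, -, hTkl⟩ := card_eq_two.mp (show #(univ.filter (¬P ·)) = 2 by omega)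
  have hmemS : ∀ m ∈ ({i, j} : Finset (Fin 4)), P m := fun m hm => by
    rw [← hSij] at hm; simpa using hm
  have hmemT : ∀ m ∈ ({k, l} : Finset (Fin 4)), Q m := fun m hm => by
    rw [← hTkl] at hm; exact (hPQ m).resolve_left (by simpa using hm)
  refine ⟨i, j, k, l, ?_, hmemS i (by simp), hmemS j (by simp), hmemT k (by simp),
    hmemT l (by simp)⟩
  rw [← filter_union_filter_not_eq P univ, hSij, hTkl]
  ext; simp only [mem_insert, mem_singleton, mem_union]; tauto

section InnerProductSpace

variable {V : Type*} [NormedAddCommGroup V] [InnerProductSpace ℝ V]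

lemma two_mul_inner_sub_eq_of_dist_eq {a x y : V} (h : dist a x = dist a y) :
    2 * ⟪a, y - x⟫ = ‖y‖ ^ 2 - ‖x‖ ^ 2 := by
  have hsq : ‖a - x‖ ^ 2 = ‖a - y‖ ^ 2 := by rw [← dist_eq_norm, ← dist_eq_norm, h]
  rw [norm_sub_sq_real, norm_sub_sq_real] at hsq
  rw [inner_sub_right]
  linarith

lemma two_mul_inner_add_sub_add_eq_of_pair_dist_eq {a x₁ x₂ y₁ y₂ : V}
    (h : ({dist a y₁, dist a y₂} : Set ℝ) = {dist a x₁, dist a x₂}) :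
    2 * ⟪a, (y₁ + y₂) - (x₁ + x₂)⟫ = ‖y₁‖ ^ 2 + ‖y₂‖ ^ 2 - ‖x₁‖ ^ 2 - ‖x₂‖ ^ 2 := by
  rw [inner_sub_right, inner_add_right, inner_add_right]
  rcases Set.pair_eq_pair_iff.mp h with ⟨h₁, h₂⟩ | ⟨h₁, h₂⟩
  all_goals
    have e₁ := two_mul_inner_sub_eq_of_dist_eq h₁.symm
    have e₂ := two_mul_inner_sub_eq_of_dist_eq h₂.symm
    rw [inner_sub_right] at e₁ e₂
    linarith

lemma inner_sub_sub_eq_zero_of_pair_dist_eq {a x₁ x₂ y₁ y₂ : V} (hsum : y₁ + y₂ = x₁ + x₂)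
    (h : ({dist a y₁, dist a y₂} : Set ℝ) = {dist a x₁, dist a x₂}) :
    ⟪x₁ - y₁, x₂ - y₁⟫ = 0 := by
  have hnorm := two_mul_inner_add_sub_add_eq_of_pair_dist_eq h
  rw [hsum, sub_self, inner_zero_right, eq_sub_of_add_eq' hsum] at hnorm
  simp only [← real_inner_self_eq_norm_sq, inner_sub_left, inner_sub_right, inner_add_left,
    inner_add_right, real_inner_comm x₁ x₂, real_inner_comm x₁ y₁, real_inner_comm x₂ y₁] at hnorm ⊢
  linarith

lemma inner_sub_sub_eq_zero_of_dist_eq_dist {p q x y : V} (hp : dist p x = dist p y)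
    (hq : dist q x = dist q y) : ⟪q - p, y - x⟫ = 0 := by
  rw [inner_sub_left]
  linarith [two_mul_inner_sub_eq_of_dist_eq hp, two_mul_inner_sub_eq_of_dist_eq hq]

variable [Fact (finrank ℝ V = 2)]

lemma collinear_of_forall_inner_eq {s : Set V} {v : V} {c : ℝ} (hv : v ≠ 0)
    (hs : ∀ p ∈ s, ⟪p, v⟫ = c) : Collinear ℝ s := by
  have : FiniteDimensional ℝ V := .of_fact_finrank_eq_succ 1
  have hle : vectorSpan ℝ s ≤ (ℝ ∙ v)ᗮ := by
    rw [vectorSpan_def, Submodule.span_le]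
    rintro _ ⟨p, hp, q, hq, rfl⟩
    rw [SetLike.mem_coe, Submodule.mem_orthogonal_singleton_iff_inner_left]
    dsimp only
    rw [vsub_eq_sub, inner_sub_left, hs p hp, hs q hq, sub_self]
  rw [collinear_iff_finrank_le_one]
  exact (Submodule.finrank_mono hle).trans (Submodule.finrank_orthogonal_span_singleton hv).le

lemma collinear_of_forall_dist_eq_dist {s : Set V} {x y : V} (hxy : x ≠ y)
    (hs : ∀ p ∈ s, dist p x = dist p y) : Collinear ℝ s :=
  collinear_of_forall_inner_eq (sub_ne_zero.mpr hxy.symm) (c := (‖y‖ ^ 2 - ‖x‖ ^ 2) / 2)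
    fun p hp => by linarith [two_mul_inner_sub_eq_of_dist_eq (hs p hp)]

lemma add_eq_add_of_forall_pair_dist_eq {s : Set V} (hs : ¬Collinear ℝ s) {x₁ x₂ y₁ y₂ : V}
    (h : ∀ a ∈ s, ({dist a y₁, dist a y₂} : Set ℝ) = {dist a x₁, dist a x₂}) :
    y₁ + y₂ = x₁ + x₂ := by
  by_contra hne
  exact hs <| collinear_of_forall_inner_eq (sub_ne_zero.mpr hne)
    (c := (‖y₁‖ ^ 2 + ‖y₂‖ ^ 2 - ‖x₁‖ ^ 2 - ‖x₂‖ ^ 2) / 2)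
    fun a ha => by linarith [two_mul_inner_add_sub_add_eq_of_pair_dist_eq (h a ha)]

lemma inner_eq_zero_of_inner_normals_eq_zero {e f u w : V} (he : e ≠ 0) (hf : f ≠ 0)
    (hef : ⟪e, f⟫ = 0) (hu : ⟪u, e⟫ = 0) (hw : ⟪w, f⟫ = 0) : ⟪u, w⟫ = 0 := by
  obtain ⟨c, rfl⟩ := Submodule.mem_span_singleton.mp
    (Submodule.mem_span_singleton_of_inner_eq_zero_of_inner_eq_zero he hf
      (by rwa [real_inner_comm]) hef)
  obtain ⟨d, rfl⟩ := Submodule.mem_span_singleton.mp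
    (Submodule.mem_span_singleton_of_inner_eq_zero_of_inner_eq_zero hf he
      (by rwa [real_inner_comm]) (by rwa [real_inner_comm]))
  rw [real_inner_smul_left, real_inner_smul_right, real_inner_comm, hef, mul_zero, mul_zero]

lemma exists_pair_partition_of_forall_dist_eq_or {a : Fin 4 → V}
    (hcol : ∀ i j k : Fin 4, i ≠ j → i ≠ k → j ≠ k → ¬Collinear ℝ ({a i, a j, a k} : Set V))
    {y x₁ x₂ : V} (h₁ : y ≠ x₁) (h₂ : y ≠ x₂)
    (h : ∀ m, dist (a m) y = dist (a m) x₁ ∨ dist (a m) y = dist (a m) x₂) :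
    ∃ i j k l, ({i, j, k, l} : Finset (Fin 4)) = univ ∧
      ⟪a j - a i, x₁ - y⟫ = 0 ∧ ⟪a l - a k, x₂ - y⟫ = 0 := by
  have hnotThree (x : V) (hx : y ≠ x) : ¬∃ i j k, i ≠ j ∧ i ≠ k ∧ j ≠ k ∧
      dist (a i) y = dist (a i) x ∧ dist (a j) y = dist (a j) x ∧ dist (a k) y = dist (a k) x :=
    fun ⟨i, j, k, hij, hik, hjk, hi, hj, hk⟩ => hcol i j k hij hik hjk
      (collinear_of_forall_dist_eq_dist hx (by rintro _ (rfl | rfl | rfl) <;> assumption))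
  obtain ⟨i, j, k, l, huniv, hi, hj, hk, hl⟩ :=
    Fin.exists_pair_partition_of_forall_or h (hnotThree x₁ h₁) (hnotThree x₂ h₂)
  exact ⟨i, j, k, l, huniv, inner_sub_sub_eq_zero_of_dist_eq_dist hi hj,
    inner_sub_sub_eq_zero_of_dist_eq_dist hk hl⟩

end InnerProductSpace

open scoped EuclideanSpace

theorem no_ghost_of_no_perpendicular_general (a : Fin 4 → Plane)
    (hcol : ∀ i j k : Fin 4, i ≠ j → i ≠ k → j ≠ k →
      ¬ Collinear ℝ ({a i, a j, a k} : Set Plane))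
    (hperp : ∀ i j k l : Fin 4, ({i, j, k, l} : Finset (Fin 4)) = Finset.univ →
      (inner ℝ (a j - a i) (a l - a k) : ℝ) ≠ 0)
    (X : Set Plane) (hXcard : X.ncard = 2)
    (XG : Set Plane) (hGcard : XG.ncard = 2)
    (hranges : ∀ m : Fin 4, rangeSet (a m) XG = rangeSet (a m) X) :
    XG = X := by
  obtain ⟨x₁, x₂, -, rfl⟩ := Set.ncard_eq_two.mp hXcard
  obtain ⟨y₁, y₂, -, rfl⟩ := Set.ncard_eq_two.mp hGcard
  have hdist (m : Fin 4) : ({dist (a m) y₁, dist (a m) y₂} : Set ℝ) =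
      {dist (a m) x₁, dist (a m) x₂} := by
    simpa only [rangeSet, Set.image_pair] using hranges m
  have hsum : y₁ + y₂ = x₁ + x₂ :=
    add_eq_add_of_forall_pair_dist_eq
      (fun h => hcol 0 1 2 (by decide) (by decide) (by decide)
        (h.subset (by simp [Set.insert_subset_iff])))
      (Set.forall_mem_range.mpr hdist)
  by_cases h₁ : y₁ = x₁
  · subst h₁
    rw [add_left_cancel hsum]
  by_cases h₂ : y₁ = x₂
  · subst h₂
    rw [add_comm x₁] at hsum
    rw [add_left_cancel hsum, Set.pair_comm]
  have hor (m : Fin 4) : dist (a m) y₁ = dist (a m) x₁ ∨ dist (a m) y₁ = dist (a m) x₂ := by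
    simpa only [hdist m, Set.mem_insert_iff, Set.mem_singleton_iff] using
      Set.mem_insert (dist (a m) y₁) {dist (a m) y₂}
  obtain ⟨i, j, k, l, huniv, hij, hkl⟩ :=
    exists_pair_partition_of_forall_dist_eq_or hcol h₁ h₂ hor
  exact absurd (inner_eq_zero_of_inner_normals_eq_zero (sub_ne_zero.mpr (Ne.symm h₁))
    (sub_ne_zero.mpr (Ne.symm h₂)) (inner_sub_sub_eq_zero_of_pair_dist_eq hsum (hdist 0)) hij hkl)
    (hperp i j k l huniv)

/-- **Lemma 1 (first part).** With `M = 4` BSs, no three of which are collinear,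
if for every partition of the BSs into two pairs the line through one pair is not
perpendicular to the line through the other pair, then no ghost configuration
exists for any set of `K = 2` targets. -/
theorem no_ghost_of_no_perpendicular (a : Fin 4 → Plane)
    (hcol : ∀ i j k : Fin 4, i ≠ j → i ≠ k → j ≠ k →
      ¬ Collinear ℝ ({a i, a j, a k} : Set Plane))
    (hperp : ∀ i j k l : Fin 4, ({i, j, k, l} : Finset (Fin 4)) = Finset.univ →
      (inner ℝ (a j - a i) (a l - a k) : ℝ) ≠ 0)
    (X : Set Plane) (hXfin : X.Finite) (hXcard : X.ncard = 2)
    (XG : Set Plane) (hGfin : XG.Finite) (hGcard : XG.ncard = 2)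
    (hranges : ∀ m : Fin 4, rangeSet (a m) XG = rangeSet (a m) X) :
    XG = X :=
  no_ghost_of_no_perpendicular_general a hcol hperp X hXcard XG hGcard hranges
end
end

section
/- Let a_1, a_2, a_3, a_4 be four points in ℝ² (the BSs), no three of which are collinear, and let X = {p_1, p_2} ⊆ ℝ² be a set of two targets. If a ghost configuration X^G exists for X, then there is a partition of {1,2,3,4} into two pairs {i,j} and {k,l} such that the line through a_i and a_j is perpendicular to the line through a_k and a_l, and the intersection point O of these two lines is the midpoint of the segment joining p_1 and p_2, i.e., p_1 + p_2 = 2·O. -/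
noncomputable section

/-!
Let the ghost configuration be `{q₁, q₂}`. At every BS the two ranges agree as a set, so the sums
of their squares agree. By Apollonius,
`dist a q₁ ^ 2 + dist a q₂ ^ 2 - dist a p₁ ^ 2 - dist a p₂ ^ 2` is
`2 (dist a m_G ^ 2 - dist a m_X ^ 2)` plus a constant, where `m_G`, `m_X` are the midpoints; this
is an affine function of `a` with linear part `4 ⟪a, m_X - m_G⟫`, and it vanishes at three
non-collinear BSs, so `m_G = m_X`. Hence `q₁q₂` is a second diameter of the circle on the
diameter `p₁p₂`.

Each BS is as far from `q₁` as from `p₁` or as from `p₂`, so it lies on the perpendicular bisector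
of `q₁p₁` or on that of `q₁p₂`. Both bisectors pass through the centre `O = m_X`, and they are
perpendicular because the angle `p₁ q₁ p₂` is right (Thales). As no three BSs are collinear, each
of the two lines carries exactly two of them.
-/

open EuclideanGeometry AffineSubspace Module InnerProductGeometry
open scoped InnerProductSpace Finset

section Affine

variable {𝕜 V P ι : Type*} [DivisionRing 𝕜] [AddCommGroup V] [Module 𝕜 V] [AddTorsor V P]

theorem card_filter_mem_le_two_of_not_collinear [Fintype ι] {a : ι → P}
    (ha : ∀ i j l, i ≠ j → i ≠ l → j ≠ l → ¬Collinear 𝕜 {a i, a j, a l})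
    {L : Set P} [DecidablePred (a · ∈ L)] (hL : Collinear 𝕜 L) :
    #{m | a m ∈ L} ≤ 2 := by
  by_contra! h
  obtain ⟨i, hi, j, hj, l, hl, hij, hil, hjl⟩ := Finset.two_lt_card.1 h
  simp only [Finset.mem_filter, Finset.mem_univ, true_and] at hi hj hl
  exact ha i j l hij hil hjl (hL.subset (by simp [Set.insert_subset_iff, hi, hj, hl]))

theorem exists_pairs_mem_of_forall_mem_or_mem {a : Fin 4 → P}
    (ha : ∀ i j l, i ≠ j → i ≠ l → j ≠ l → ¬Collinear 𝕜 {a i, a j, a l})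
    {L₁ L₂ : Set P} (h₁ : Collinear 𝕜 L₁) (h₂ : Collinear 𝕜 L₂)
    (hcover : ∀ m, a m ∈ L₁ ∨ a m ∈ L₂) :
    ∃ i j k l, ({i, j, k, l} : Finset (Fin 4)) = Finset.univ ∧ a i ≠ a j ∧ a k ≠ a l ∧
      a i ∈ L₁ ∧ a j ∈ L₁ ∧ a k ∈ L₂ ∧ a l ∈ L₂ := by
  classical
  have hA := card_filter_mem_le_two_of_not_collinear ha h₁
  have hB : #{m | a m ∉ L₁} ≤ 2 :=
    (Finset.card_le_card fun m hm ↦ by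
      simp only [Finset.mem_filter, Finset.mem_univ, true_and] at hm ⊢
      exact (hcover m).resolve_left hm).trans (card_filter_mem_le_two_of_not_collinear ha h₂)
  have hAB := Finset.card_filter_add_card_filter_not (s := Finset.univ) (a · ∈ L₁)
  rw [Finset.card_univ, Fintype.card_fin] at hAB
  obtain ⟨i, j, hij, hA'⟩ := Finset.card_eq_two.1 (by omega : #{m | a m ∈ L₁} = 2)
  obtain ⟨k, l, hkl, hB'⟩ := Finset.card_eq_two.1 (by omega : #{m | a m ∉ L₁} = 2)
  have hmemA : ∀ m, m ∈ ({i, j} : Finset (Fin 4)) ↔ a m ∈ L₁ := by simp [← hA']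
  have hmemB : ∀ m, m ∈ ({k, l} : Finset (Fin 4)) ↔ a m ∉ L₁ := by simp [← hB']
  have hi := (hmemA i).1 (by simp)
  have hj := (hmemA j).1 (by simp)
  have hk := (hmemB k).1 (by simp)
  have hl := (hmemB l).1 (by simp)
  have hne {x y : Fin 4} (hx : a x ∈ L₁) (hy : a y ∉ L₁) : x ≠ y := fun h ↦ hy (h ▸ hx)
  have hsep {x y z : Fin 4} (hxy : x ≠ y) (hxz : x ≠ z) (hyz : y ≠ z) : a x ≠ a y := fun h ↦
    ha x y z hxy hxz hyz (by rw [h, Set.insert_idem]; exact collinear_pair 𝕜 _ _)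
  refine ⟨i, j, k, l, ?_, hsep hij (hne hi hk) (hne hj hk),
    hsep hkl (hne hi hk).symm (hne hi hl).symm, hi, hj, (hcover k).resolve_left hk,
    (hcover l).resolve_left hl⟩
  refine Finset.eq_univ_iff_forall.2 fun m ↦ ?_
  by_cases hm : a m ∈ L₁
  · have := (hmemA m).2 hm
    simp only [Finset.mem_insert, Finset.mem_singleton] at this ⊢
    tauto
  · have := (hmemB m).2 hm
    simp only [Finset.mem_insert, Finset.mem_singleton] at this ⊢
    tauto

end Affine

section Euclidean

variable {V P : Type*} [NormedAddCommGroup V] [InnerProductSpace ℝ V] [MetricSpace P]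
  [NormedAddTorsor V P]

theorem two_mul_inner_vsub_vsub_eq (a b m m' : P) :
    2 * ⟪a -ᵥ b, m' -ᵥ m⟫_ℝ =
      dist a m ^ 2 - dist a m' ^ 2 - (dist b m ^ 2 - dist b m' ^ 2) := by
  rw [dist_eq_norm_vsub V, dist_eq_norm_vsub V, dist_eq_norm_vsub V b, dist_eq_norm_vsub V b,
    ← vsub_add_vsub_cancel a b m, ← vsub_add_vsub_cancel a b m',
    ← vsub_sub_vsub_cancel_left m' m b, norm_add_sq_real, norm_add_sq_real, inner_sub_right]
  ring

theorem EuclideanGeometry.Sphere.center_mem_perpBisector {s : Sphere P} {p₁ p₂ : P}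
    (h₁ : p₁ ∈ s) (h₂ : p₂ ∈ s) : s.center ∈ perpBisector p₁ p₂ :=
  mem_perpBisector_iff_dist_eq'.2 ((mem_sphere.1 h₁).trans (mem_sphere.1 h₂).symm)

theorem EuclideanGeometry.Sphere.IsDiameter.ne_left_and_ne_right_of_isDiameter {s : Sphere P}
    {p₁ p₂ q₁ q₂ : P} (hp : s.IsDiameter p₁ p₂) (hq : s.IsDiameter q₁ q₂)
    (hne : ({q₁, q₂} : Set P) ≠ {p₁, p₂}) : q₁ ≠ p₁ ∧ q₁ ≠ p₂ := by
  constructor <;> rintro rfl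
  · exact hne (by rw [hq.right_eq_of_isDiameter hp])
  · exact hne (by rw [hq.right_eq_of_isDiameter hp.symm, Set.pair_comm])

theorem inner_vsub_vsub_of_mem_perpBisector {p₁ p₂ x y : P} (hx : x ∈ perpBisector p₁ p₂)
    (hy : y ∈ perpBisector p₁ p₂) : ⟪y -ᵥ x, p₂ -ᵥ p₁⟫_ℝ = 0 :=
  inner_vsub_vsub_of_dist_eq_of_dist_eq (mem_perpBisector_iff_dist_eq'.1 hx)
    (mem_perpBisector_iff_dist_eq'.1 hy)

variable [Fact (finrank ℝ V = 2)]

theorem collinear_of_forall_inner_vsub_eq_zero {v : V} (hv : v ≠ 0) {s : Set P}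
    (h : ∀ x ∈ s, ∀ y ∈ s, ⟪x -ᵥ y, v⟫_ℝ = 0) : Collinear ℝ s := by
  have : FiniteDimensional ℝ V := .of_fact_finrank_eq_succ 1
  have hle : vectorSpan ℝ s ≤ (ℝ ∙ v)ᗮ := Submodule.span_le.2 <| by
    rintro _ ⟨x, hx, y, hy, rfl⟩
    exact Submodule.mem_orthogonal_singleton_iff_inner_left.2 (h x hx y hy)
  rw [collinear_iff_finrank_le_one]
  exact (Submodule.finrank_mono hle).trans (Submodule.finrank_orthogonal_span_singleton hv).le

theorem collinear_perpBisector_s3 {p₁ p₂ : P} (h : p₁ ≠ p₂) :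
    Collinear ℝ (perpBisector p₁ p₂ : Set P) :=
  collinear_of_forall_inner_vsub_eq_zero (vsub_ne_zero.2 h.symm) fun _ hx _ hy ↦
    inner_vsub_vsub_of_mem_perpBisector hy hx

theorem inner_eq_zero_of_normals_inner_eq_zero {u w x y : V} (hu : u ≠ 0) (hw : w ≠ 0)
    (huw : ⟪u, w⟫_ℝ = 0) (hx : ⟪x, u⟫_ℝ = 0) (hy : ⟪y, w⟫_ℝ = 0) : ⟪x, y⟫_ℝ = 0 := by
  have : FiniteDimensional ℝ V := .of_fact_finrank_eq_succ 1
  have hspan : ℝ ∙ w = (ℝ ∙ u)ᗮ := by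
    refine Submodule.eq_of_le_of_finrank_eq ?_ ?_
    · exact (Submodule.span_singleton_le_iff_mem _ _).2
        (Submodule.mem_orthogonal_singleton_iff_inner_right.2 huw)
    · rw [finrank_span_singleton hw, Submodule.finrank_orthogonal_span_singleton (n := 1) hu]
  have hx' : x ∈ ℝ ∙ w := hspan ▸ Submodule.mem_orthogonal_singleton_iff_inner_left.2 hx
  exact Submodule.inner_right_of_mem_orthogonal hx'
    (Submodule.mem_orthogonal_singleton_iff_inner_left.2 hy)

theorem eq_of_dist_sq_sub_dist_sq_eq_const {s : Set P} (hs : ¬Collinear ℝ s) {m m' : P} {c : ℝ}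
    (h : ∀ a ∈ s, dist a m ^ 2 - dist a m' ^ 2 = c) : m = m' := by
  by_contra hne
  refine hs (collinear_of_forall_inner_vsub_eq_zero (vsub_ne_zero.2 (Ne.symm hne)) ?_)
  intro a ha b hb
  have := two_mul_inner_vsub_vsub_eq a b m m'
  rw [h a ha, h b hb, sub_self] at this
  linarith

theorem isDiameter_ofDiameter_of_sum_sq_dist_eq {s : Set P} (hs : ¬Collinear ℝ s)
    {p₁ p₂ q₁ q₂ : P}
    (h : ∀ a ∈ s, dist a q₁ ^ 2 + dist a q₂ ^ 2 = dist a p₁ ^ 2 + dist a p₂ ^ 2) :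
    (Sphere.ofDiameter p₁ p₂).IsDiameter q₁ q₂ := by
  obtain ⟨a₀, ha₀⟩ : s.Nonempty :=
    Set.nonempty_iff_ne_empty.2 fun h ↦ hs (h ▸ collinear_empty ℝ P)
  have hmid : midpoint ℝ q₁ q₂ = midpoint ℝ p₁ p₂ := by
    refine eq_of_dist_sq_sub_dist_sq_eq_const hs (c := (dist p₁ p₂ / 2) ^ 2 - (dist q₁ q₂ / 2) ^ 2)
      fun a ha ↦ ?_
    have := h a ha
    rw [dist_sq_add_dist_sq_eq_two_mul_dist_midpoint_sq_add_half_dist_sq,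
      dist_sq_add_dist_sq_eq_two_mul_dist_midpoint_sq_add_half_dist_sq] at this
    linarith
  have hdist : dist q₁ q₂ = dist p₁ p₂ := by
    have := h a₀ ha₀
    rw [dist_sq_add_dist_sq_eq_two_mul_dist_midpoint_sq_add_half_dist_sq,
      dist_sq_add_dist_sq_eq_two_mul_dist_midpoint_sq_add_half_dist_sq, hmid] at this
    nlinarith [dist_nonneg (x := q₁) (y := q₂), dist_nonneg (x := p₁) (y := p₂)]
  have hsph : Sphere.ofDiameter q₁ q₂ = Sphere.ofDiameter p₁ p₂ := by
    ext
    · exact hmid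
    · simp [Sphere.ofDiameter, hdist]
  exact hsph ▸ Sphere.isDiameter_ofDiameter q₁ q₂

end Euclidean

instance Plane.fact_finrank_eq_two : Fact (finrank ℝ Plane = 2) := ⟨finrank_euclideanSpace_fin⟩

theorem rangeSet_pair (a p q : Plane) : rangeSet a {p, q} = {dist a p, dist a q} :=
  Set.image_pair _ _ _

theorem ghost_implies_perpendicular_midpoint_general (a : Fin 4 → Plane)
    (hcol : ∀ i j k : Fin 4, i ≠ j → i ≠ k → j ≠ k →
      ¬ Collinear ℝ ({a i, a j, a k} : Set Plane))
    (p₁ p₂ : Plane)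
    (XG : Set Plane) (hGcard : XG.ncard = 2)
    (hGne : XG ≠ ({p₁, p₂} : Set Plane))
    (hranges : ∀ m : Fin 4, rangeSet (a m) XG = rangeSet (a m) ({p₁, p₂} : Set Plane)) :
    ∃ i j k l : Fin 4, ({i, j, k, l} : Finset (Fin 4)) = Finset.univ ∧
      (inner ℝ (a j - a i) (a l - a k) : ℝ) = 0 ∧
      ∃ O : Plane, O ∈ affineSpan ℝ ({a i, a j} : Set Plane) ∧
        O ∈ affineSpan ℝ ({a k, a l} : Set Plane) ∧
        p₁ + p₂ = (2 : ℝ) • O := by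
  obtain ⟨q₁, q₂, -, rfl⟩ := Set.ncard_eq_two.1 hGcard
  have hdist (m : Fin 4) :
      (dist (a m) q₁ = dist (a m) p₁ ∧ dist (a m) q₂ = dist (a m) p₂) ∨
        (dist (a m) q₁ = dist (a m) p₂ ∧ dist (a m) q₂ = dist (a m) p₁) := by
    simpa only [rangeSet_pair, Set.pair_eq_pair_iff] using hranges m
  have hX := Sphere.isDiameter_ofDiameter p₁ p₂
  have hG : (Sphere.ofDiameter p₁ p₂).IsDiameter q₁ q₂ := by
    refine isDiameter_ofDiameter_of_sum_sq_dist_eq (s := Set.range a) (fun h ↦ hcol 0 1 2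
      (by decide) (by decide) (by decide) (h.subset (by simp [Set.insert_subset_iff]))) ?_
    rintro _ ⟨m, rfl⟩
    rcases hdist m with ⟨h₁, h₂⟩ | ⟨h₁, h₂⟩
    · rw [h₁, h₂]
    · rw [h₁, h₂, add_comm]
  obtain ⟨hq₁p₁, hq₁p₂⟩ := hX.ne_left_and_ne_right_of_isDiameter hG hGne
  have hright : ⟪p₁ - q₁, p₂ - q₁⟫_ℝ = 0 := (inner_eq_zero_iff_angle_eq_pi_div_two _ _).2
    ((Sphere.angle_eq_pi_div_two_iff_mem_sphere_of_isDiameter hX).2 hG.left_mem)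
  obtain ⟨i, j, k, l, huniv, hij, hkl, hi, hj, hk, hl⟩ :=
    exists_pairs_mem_of_forall_mem_or_mem hcol (collinear_perpBisector_s3 hq₁p₁)
      (collinear_perpBisector_s3 hq₁p₂) fun m ↦ (hdist m).imp
        (fun h ↦ mem_perpBisector_iff_dist_eq.2 h.1) (fun h ↦ mem_perpBisector_iff_dist_eq.2 h.1)
  refine ⟨i, j, k, l, huniv, ?_, midpoint ℝ p₁ p₂, ?_, ?_, ?_⟩
  · exact inner_eq_zero_of_normals_inner_eq_zero (sub_ne_zero.2 hq₁p₁.symm)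
      (sub_ne_zero.2 hq₁p₂.symm) hright (inner_vsub_vsub_of_mem_perpBisector hi hj)
      (inner_vsub_vsub_of_mem_perpBisector hk hl)
  · exact (collinear_perpBisector_s3 hq₁p₁).mem_affineSpan_of_mem_of_ne hi hj
      (Sphere.center_mem_perpBisector hG.left_mem hX.left_mem) hij
  · exact (collinear_perpBisector_s3 hq₁p₂).mem_affineSpan_of_mem_of_ne hk hl
      (Sphere.center_mem_perpBisector hG.left_mem hX.right_mem) hkl
  · rw [midpoint_eq_smul_add, smul_smul]
    norm_num

/-- **Lemma 1 (second part).** With `M = 4` BSs, no three of which are collinear, if a ghost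
configuration exists for the two-target set `X = {p₁, p₂}`, then there is a partition of the
BSs into two pairs `{i,j}` and `{k,l}` such that the line through `a i, a j` is perpendicular
to the line through `a k, a l`, and the intersection point `O` of these two lines is the
midpoint of the segment joining `p₁` and `p₂`, i.e. `p₁ + p₂ = 2 • O`. -/
theorem ghost_implies_perpendicular_midpoint (a : Fin 4 → Plane)
    (hcol : ∀ i j k : Fin 4, i ≠ j → i ≠ k → j ≠ k →
      ¬ Collinear ℝ ({a i, a j, a k} : Set Plane))
    (p₁ p₂ : Plane) (hp : p₁ ≠ p₂)
    (XG : Set Plane) (hGfin : XG.Finite) (hGcard : XG.ncard = 2)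
    (hGne : XG ≠ ({p₁, p₂} : Set Plane))
    (hranges : ∀ m : Fin 4, rangeSet (a m) XG = rangeSet (a m) ({p₁, p₂} : Set Plane)) :
    ∃ i j k l : Fin 4, ({i, j, k, l} : Finset (Fin 4)) = Finset.univ ∧
      (inner ℝ (a j - a i) (a l - a k) : ℝ) = 0 ∧
      ∃ O : Plane, O ∈ affineSpan ℝ ({a i, a j} : Set Plane) ∧
        O ∈ affineSpan ℝ ({a k, a l} : Set Plane) ∧
        p₁ + p₂ = (2 : ℝ) • O :=
  ghost_implies_perpendicular_midpoint_general a hcol p₁ p₂ XG hGcard hGne hranges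
end
end

section
/- Let a_1, …, a_M be points in ℝ² with M ≥ 4 and no three of them collinear. Fix an integer i ≥ 2 and points p_1, …, p_{i−1} ∈ ℝ². Then the set of points p ∈ ℝ² such that X = {p_1, …, p_{i−1}, p} has exactly i elements and there exists a set X^G ⊆ ℝ² with |X^G| = i, X^G ∩ X = ∅, and D_m(X^G) = D_m(X) for every m = 1, …, M, is a finite subset of ℝ². -/
noncomputable section

open AffineSubspace Module

local notation "⟪" x ", " y "⟫" => @inner ℝ _ _ x y

lemma plane_finrank : finrank ℝ Plane = 2 := finrank_euclideanSpace_fin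

/-- A line's worth of orthogonality: the orthogonal complement of a nonzero vector in
the plane has finrank 1. -/
lemma finrank_orthogonal_singleton {v : Plane} (hv : v ≠ 0) :
    finrank ℝ ((ℝ ∙ v)ᗮ : Submodule ℝ Plane) = 1 := by
  have h := Submodule.finrank_add_finrank_orthogonal (K := (ℝ ∙ v : Submodule ℝ Plane))
  rw [finrank_span_singleton hv, plane_finrank] at h
  omega

/-- Two distinct points in the plane equidistant (pairwise) from three non-collinear
points must coincide. -/
lemma eq_of_dist_eq_three {c₁ c₂ c₃ x y : Plane}
    (hncol : ¬ Collinear ℝ ({c₁, c₂, c₃} : Set Plane))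
    (h1 : dist c₁ x = dist c₁ y) (h2 : dist c₂ x = dist c₂ y)
    (h3 : dist c₃ x = dist c₃ y) : x = y := by
  by_contra hne
  apply hncol
  have hsub : ({c₁, c₂, c₃} : Set Plane) ⊆ (perpBisector x y : Set Plane) := by
    intro c hc
    rcases hc with rfl | rfl | rfl
    · exact mem_perpBisector_iff_dist_eq.2 h1
    · exact mem_perpBisector_iff_dist_eq.2 h2
    · exact mem_perpBisector_iff_dist_eq.2 h3
  have hle : vectorSpan ℝ ({c₁, c₂, c₃} : Set Plane) ≤ (perpBisector x y).direction := by
    rw [← direction_affineSpan]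
    exact AffineSubspace.direction_le (affineSpan_le.2 hsub)
  have hv : y -ᵥ x ≠ 0 := vsub_ne_zero.2 (Ne.symm hne)
  have hd : finrank ℝ (perpBisector x y).direction = 1 := by
    rw [direction_perpBisector]
    exact finrank_orthogonal_singleton hv
  rw [collinear_iff_finrank_le_one]
  calc finrank ℝ (vectorSpan ℝ ({c₁, c₂, c₃} : Set Plane))
      ≤ finrank ℝ (perpBisector x y).direction := Submodule.finrank_mono hle
    _ = 1 := hd

/-- The intersection of two spheres in the plane with distinct centers is finite. -/
lemma sphere_inter_sphere_finite {c₁ c₂ : Plane} (h : c₁ ≠ c₂) (r₁ r₂ : ℝ) :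
    (Metric.sphere c₁ r₁ ∩ Metric.sphere c₂ r₂).Finite := by
  by_contra hinf
  have hI : (Metric.sphere c₁ r₁ ∩ Metric.sphere c₂ r₂).Infinite := hinf
  obtain ⟨x, hx⟩ := hI.nonempty
  obtain ⟨y, hy, hyx⟩ := (hI.diff (Set.finite_singleton x)).nonempty
  obtain ⟨z, hz, hzm⟩ := (hI.diff ((Set.finite_singleton x).insert y)).nonempty
  simp only [Set.mem_singleton_iff] at hyx
  simp only [Set.mem_insert_iff, Set.mem_singleton_iff, not_or] at hzm
  obtain ⟨hzy, hzx⟩ := hzm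
  obtain ⟨hx1, hx2⟩ := hx
  obtain ⟨hy1, hy2⟩ := hy
  obtain ⟨hz1, hz2⟩ := hz
  rw [Metric.mem_sphere] at hx1 hx2 hy1 hy2 hz1 hz2
  -- both centers are on the perpendicular bisectors of (x,y) and (x,z)
  have hc1xy : c₁ ∈ perpBisector x y :=
    mem_perpBisector_iff_dist_eq.2 (by rw [dist_comm c₁ x, dist_comm c₁ y, hx1, hy1])
  have hc2xy : c₂ ∈ perpBisector x y :=
    mem_perpBisector_iff_dist_eq.2 (by rw [dist_comm c₂ x, dist_comm c₂ y, hx2, hy2])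
  have hc1xz : c₁ ∈ perpBisector x z :=
    mem_perpBisector_iff_dist_eq.2 (by rw [dist_comm c₁ x, dist_comm c₁ z, hx1, hz1])
  have hc2xz : c₂ ∈ perpBisector x z :=
    mem_perpBisector_iff_dist_eq.2 (by rw [dist_comm c₂ x, dist_comm c₂ z, hx2, hz2])
  set v : Plane := c₂ -ᵥ c₁ with hv
  have hvne : v ≠ 0 := vsub_ne_zero.2 (Ne.symm h)
  have hvxy : v ∈ (perpBisector x y).direction := AffineSubspace.vsub_mem_direction hc2xy hc1xy
  have hvxz : v ∈ (perpBisector x z).direction := AffineSubspace.vsub_mem_direction hc2xz hc1xz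
  rw [direction_perpBisector] at hvxy hvxz
  have hyxv : (y -ᵥ x) ∈ ((ℝ ∙ v)ᗮ : Submodule ℝ Plane) := by
    rw [Submodule.mem_orthogonal_singleton_iff_inner_right]
    have := Submodule.mem_orthogonal_singleton_iff_inner_right.1 hvxy
    rwa [real_inner_comm]
  have hzxv : (z -ᵥ x) ∈ ((ℝ ∙ v)ᗮ : Submodule ℝ Plane) := by
    rw [Submodule.mem_orthogonal_singleton_iff_inner_right]
    have := Submodule.mem_orthogonal_singleton_iff_inner_right.1 hvxz
    rwa [real_inner_comm]
  have hune : y -ᵥ x ≠ 0 := vsub_ne_zero.2 hyx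
  -- the orthogonal complement of v is one-dimensional and contains y -ᵥ x
  have hspan : (ℝ ∙ (y -ᵥ x) : Submodule ℝ Plane) = (ℝ ∙ v)ᗮ := by
    refine Submodule.eq_of_le_of_finrank_le ?_ ?_
    · rw [Submodule.span_singleton_le_iff_mem]; exact hyxv
    · rw [finrank_orthogonal_singleton hvne, finrank_span_singleton hune]
  have hzspan : (z -ᵥ x) ∈ (ℝ ∙ (y -ᵥ x) : Submodule ℝ Plane) := hspan ▸ hzxv
  obtain ⟨t, ht⟩ := Submodule.mem_span_singleton.1 hzspan
  -- compute inner products with c₁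
  have hxy' : ⟪c₁ -ᵥ x, y -ᵥ x⟫ = dist x y ^ 2 / 2 := mem_perpBisector_iff_inner_eq.1 hc1xy
  have hxz' : ⟪c₁ -ᵥ x, z -ᵥ x⟫ = dist x z ^ 2 / 2 := mem_perpBisector_iff_inner_eq.1 hc1xz
  have hdxy : dist x y ^ 2 = ‖y -ᵥ x‖ ^ 2 := by rw [dist_comm, dist_eq_norm_vsub Plane]
  have hdxz : dist x z ^ 2 = ‖z -ᵥ x‖ ^ 2 := by rw [dist_comm, dist_eq_norm_vsub Plane]
  rw [← ht, real_inner_smul_right, hxy'] at hxz'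
  have hnormne : ‖y -ᵥ x‖ ^ 2 ≠ 0 := pow_ne_zero 2 (norm_ne_zero_iff.2 hune)
  have hnz : dist x z ^ 2 = t ^ 2 * ‖y -ᵥ x‖ ^ 2 := by
    rw [hdxz, ← ht, norm_smul, mul_pow, Real.norm_eq_abs, sq_abs]
  have hteq : t = t ^ 2 := by
    rw [hdxy, hnz] at hxz'
    have h' : t * ‖y -ᵥ x‖ ^ 2 = t ^ 2 * ‖y -ᵥ x‖ ^ 2 := by linarith
    exact mul_right_cancel₀ hnormne h'
  have ht01 : t = 0 ∨ t = 1 := by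
    have : t * (t - 1) = 0 := by nlinarith [hteq]
    rcases mul_eq_zero.1 this with h' | h'
    · exact Or.inl h'
    · exact Or.inr (by linarith)
  rcases ht01 with rfl | rfl
  · rw [zero_smul] at ht
    exact hzx (vsub_eq_zero_iff_eq.1 ht.symm)
  · rw [one_smul] at ht
    exact hzy (vsub_left_cancel ht.symm)

/-- **Key finiteness claim of Appendix A.** If `M ≥ 4` and no three BSs are collinear,
then for fixed positions `p 1, …, p (i-1)` of the first `i - 1` targets, the set of
positions of the `i`-th target for which the resulting `i`-element target set admits a
ghost configuration disjoint from it is finite. -/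
theorem finite_ghost_positions (M : ℕ) (hM : 4 ≤ M) (a : Fin M → Plane)
    (hcol : ∀ i j k : Fin M, i ≠ j → i ≠ k → j ≠ k →
      ¬ Collinear ℝ ({a i, a j, a k} : Set Plane))
    (i : ℕ) (hi : 2 ≤ i) (p : Fin (i - 1) → Plane) :
    Set.Finite {pi : Plane |
      (insert pi (Set.range p) : Set Plane).ncard = i ∧
      ∃ XG : Set Plane, XG.Finite ∧ XG.ncard = i ∧
        XG ∩ (insert pi (Set.range p)) = ∅ ∧
        ∀ m : Fin M, rangeSet (a m) XG = rangeSet (a m) (insert pi (Set.range p))} := by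
  classical
  -- the base stations are pairwise distinct
  have hainj : ∀ m m' : Fin M, m ≠ m' → a m ≠ a m' := by
    intro m m' hmm' heq
    obtain ⟨k, hk⟩ : ∃ k : Fin M, k ≠ m ∧ k ≠ m' := by
      by_contra hno
      push_neg at hno
      have : (Finset.univ : Finset (Fin M)).card ≤ ({m, m'} : Finset (Fin M)).card := by
        apply Finset.card_le_card
        intro k _
        rcases (em (k ≠ m)).symm with h' | h'
        · push_neg at h'; simp [h']
        · simp [hno k h']
      simp only [Finset.card_univ, Fintype.card_fin] at this
      have : ({m, m'} : Finset (Fin M)).card ≤ 2 := Finset.card_insert_le _ _ |>.trans (by simp)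
      omega
    apply hcol m m' k hmm' (Ne.symm hk.1) (Ne.symm hk.2)
    rw [heq]
    have : ({a m', a m', a k} : Set Plane) = {a m', a k} := by
      simp [Set.insert_comm]
    rw [this]
    exact collinear_pair ℝ _ _
  -- the fixed finite set S that must contain every ghost point
  set S : Set Plane := ⋃ (m : Fin M), ⋃ (m' : Fin M), ⋃ (_ : m ≠ m'),
      ⋃ (j : Fin (i - 1)), ⋃ (j' : Fin (i - 1)),
        (Metric.sphere (a m) (dist (a m) (p j)) ∩ Metric.sphere (a m') (dist (a m') (p j')))
    with hS
  have hSfin : S.Finite := by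
    apply Set.finite_iUnion; intro m
    apply Set.finite_iUnion; intro m'
    apply Set.finite_iUnion; intro hne
    apply Set.finite_iUnion; intro j
    apply Set.finite_iUnion; intro j'
    exact sphere_inter_sphere_finite (hainj m m' hne) _ _
  -- the two distinguished base stations
  have h0M : (0 : ℕ) < M := by omega
  have h1M : (1 : ℕ) < M := by omega
  set m₀ : Fin M := ⟨0, h0M⟩
  set m₁ : Fin M := ⟨1, h1M⟩
  have hm01 : m₀ ≠ m₁ := by simp [m₀, m₁, Fin.ext_iff]
  -- the finite superset
  set T : Set Plane := ⋃ (s ∈ S), ⋃ (s' ∈ S),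
      (Metric.sphere (a m₀) (dist (a m₀) s) ∩ Metric.sphere (a m₁) (dist (a m₁) s'))
    with hT
  have hTfin : T.Finite := by
    apply hSfin.biUnion; intro s _
    apply hSfin.biUnion; intro s' _
    exact sphere_inter_sphere_finite (hainj m₀ m₁ hm01) _ _
  apply Set.Finite.subset hTfin
  rintro pi ⟨-, XG, hXGfin, hXGcard, hdisj, hrange⟩
  set X : Set Plane := insert pi (Set.range p) with hX
  have hpiX : pi ∈ X := Set.mem_insert _ _
  -- every ghost point belongs to S
  have hghost : ∀ q ∈ XG, q ∈ S := by
    intro q hq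
    -- for each station, the distance to q matches the distance to some target
    have hmatch : ∀ m : Fin M, ∃ x ∈ X, dist (a m) x = dist (a m) q := by
      intro m
      have : dist (a m) q ∈ rangeSet (a m) X := by
        rw [← hrange m]; exact ⟨q, hq, rfl⟩
      obtain ⟨x, hxX, hx⟩ := this
      exact ⟨x, hxX, hx⟩
    -- the set of "bad" stations, whose matching target is only pi
    set B : Finset (Fin M) :=
      Finset.univ.filter (fun m => ¬ ∃ j : Fin (i - 1), dist (a m) q = dist (a m) (p j))
      with hB
    have hBdist : ∀ m ∈ B, dist (a m) q = dist (a m) pi := by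
      intro m hm
      rw [hB, Finset.mem_filter] at hm
      obtain ⟨x, hxX, hx⟩ := hmatch m
      rcases hxX with rfl | ⟨j, rfl⟩
      · exact hx.symm
      · exact absurd ⟨j, hx.symm⟩ hm.2
    have hqpi : q ≠ pi := by
      intro h
      have : q ∈ XG ∩ X := ⟨hq, h ▸ hpiX⟩
      rw [hdisj] at this
      exact this
    have hBcard : B.card ≤ 2 := by
      by_contra hgt
      push_neg at hgt
      obtain ⟨m1, m2, m3, hm1, hm2, hm3, h12, h13, h23⟩ := Finset.two_lt_card_iff.1 hgt
      exact hqpi (eq_of_dist_eq_three (hcol m1 m2 m3 h12 h13 h23)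
        (hBdist m1 hm1) (hBdist m2 hm2) (hBdist m3 hm3))
    have hBc : 1 < Bᶜ.card := by
      have := Finset.card_compl B
      rw [Fintype.card_fin] at this
      omega
    obtain ⟨m, m', hm, hm', hmm'⟩ := Finset.one_lt_card_iff.1 hBc
    rw [Finset.mem_compl, hB, Finset.mem_filter, not_and, not_not] at hm hm'
    obtain ⟨j, hj⟩ := hm (Finset.mem_univ m)
    obtain ⟨j', hj'⟩ := hm' (Finset.mem_univ m')
    rw [hS]
    refine Set.mem_iUnion.2 ⟨m, Set.mem_iUnion.2 ⟨m', Set.mem_iUnion.2 ⟨hmm',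
      Set.mem_iUnion.2 ⟨j, Set.mem_iUnion.2 ⟨j', ?_, ?_⟩⟩⟩⟩⟩
    · rw [Metric.mem_sphere, dist_comm]; exact hj
    · rw [Metric.mem_sphere, dist_comm]; exact hj'
  -- now place pi on spheres around the two distinguished stations
  have hpi : ∀ m : Fin M, ∃ q ∈ XG, dist (a m) q = dist (a m) pi := by
    intro m
    have : dist (a m) pi ∈ rangeSet (a m) XG := by
      rw [hrange m]; exact ⟨pi, hpiX, rfl⟩
    obtain ⟨q, hqXG, hq⟩ := this
    exact ⟨q, hqXG, hq⟩
  obtain ⟨q₀, hq₀XG, hq₀⟩ := hpi m₀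
  obtain ⟨q₁, hq₁XG, hq₁⟩ := hpi m₁
  rw [hT]
  refine Set.mem_biUnion (hghost q₀ hq₀XG) (Set.mem_biUnion (hghost q₁ hq₁XG) ⟨?_, ?_⟩)
  · rw [Metric.mem_sphere, dist_comm]; exact hq₀.symm
  · rw [Metric.mem_sphere, dist_comm]; exact hq₁.symm
end
end

section
/- Let a_1, a_2, a_3, a_4 be four points in ℝ² (the BSs), no three of which are collinear. Let {p_1, p_2} and {q_1, q_2} be two 2-element subsets of ℝ² with {p_1, p_2} ∩ {q_1, q_2} = ∅, and suppose D_m({p_1, p_2}) = D_m({q_1, q_2}) for m = 1, 2, 3, 4. Then, after possibly swapping the labels of q_1 and q_2, there exists a partition of {1,2,3,4} into two pairs {i,j} and {k,l} such that: (1) dist(a_t, p_1) = dist(a_t, q_1) and dist(a_t, p_2) = dist(a_t, q_2) for every t ∈ {i,j}; (2) dist(a_t, p_1) = dist(a_t, q_2) and dist(a_t, p_2) = dist(a_t, q_1) for every t ∈ {k,l}; and (3) the line through a_i and a_j is perpendicular to the line through a_k and a_l. -/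
noncomputable section

/-!
At a BS using either matching, adding the two perpendicular-bisector equations gives
`2⟪a, q₁ + q₂ - (p₁ + p₂)⟫ = ‖q₁‖² + ‖q₂‖² - (‖p₁‖² + ‖p₂‖²)`. All four BSs satisfy this
equation and are not collinear, so both sides vanish: `p₁ q₁ p₂ q₂` is a parallelogram with equal
diagonals, i.e. a rectangle. A perpendicular bisector is a line, so each matching is used by
exactly two BSs; the line through one pair is perpendicular to `q₁ - p₁`, the line through the
other to `q₁ - p₂`, and these two sides of the rectangle are perpendicular.
-/

open Module Finset RealInnerProductSpace

def NoThreeCollinear (𝕜 : Type*) {V P ι : Type*} [DivisionRing 𝕜] [AddCommGroup V]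
    [Module 𝕜 V] [AddTorsor V P] (a : ι → P) : Prop :=
  ∀ i j k : ι, i ≠ j → i ≠ k → j ≠ k → ¬ Collinear 𝕜 ({a i, a j, a k} : Set P)

theorem card_filter_le_two_of_collinear {𝕜 V P ι : Type*} [DivisionRing 𝕜] [AddCommGroup V]
    [Module 𝕜 V] [AddTorsor V P] [Fintype ι] {a : ι → P} (hcol : NoThreeCollinear 𝕜 a)
    (S : ι → Prop) [DecidablePred S] (hS : Collinear 𝕜 (a '' {m | S m})) : #{m | S m} ≤ 2 := by
  by_contra! h
  obtain ⟨i, hi, j, hj, l, hl, hij, hil, hjl⟩ := two_lt_card.1 h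
  refine hcol i j l hij hil hjl (hS.subset ?_)
  simp only [mem_filter, mem_univ, true_and] at hi hj hl
  rintro _ (rfl | rfl | rfl) <;> exact Set.mem_image_of_mem a ‹_›

section InnerProductSpace

variable {E : Type*} [NormedAddCommGroup E] [InnerProductSpace ℝ E]

theorem inner_sub_eq_of_dist_eq {a p q : E} (h : dist a p = dist a q) :
    ⟪a, q - p⟫ = (‖q‖ ^ 2 - ‖p‖ ^ 2) / 2 := by
  have hsq : ‖a - p‖ ^ 2 = ‖a - q‖ ^ 2 := by rw [← dist_eq_norm, ← dist_eq_norm, h]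
  rw [norm_sub_sq_real, norm_sub_sq_real] at hsq
  rw [inner_sub_right]
  linarith

theorem inner_sub_sub_eq_zero_of_dist_eq_of_dist_eq {a b p q : E} (ha : dist a p = dist a q)
    (hb : dist b p = dist b q) : ⟪b - a, q - p⟫ = 0 := by
  rw [inner_sub_left, inner_sub_eq_of_dist_eq ha, inner_sub_eq_of_dist_eq hb, sub_self]

theorem inner_sub_sub_eq_zero_of_add_eq_add {p₁ p₂ q₁ q₂ : E} (hsum : q₁ + q₂ = p₁ + p₂)
    (hnorm : ‖q₁‖ ^ 2 + ‖q₂‖ ^ 2 = ‖p₁‖ ^ 2 + ‖p₂‖ ^ 2) : ⟪q₁ - p₁, q₁ - p₂⟫ = 0 := by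
  obtain rfl : q₂ = p₁ + p₂ - q₁ := by rw [← hsum]; abel
  simp only [← real_inner_self_eq_norm_sq, inner_add_left, inner_sub_left, inner_add_right,
    inner_sub_right] at hnorm ⊢
  rw [real_inner_comm p₁ p₂, real_inner_comm q₁ p₁, real_inner_comm q₁ p₂] at hnorm
  rw [real_inner_comm q₁ p₁]
  linarith

variable [Fact (finrank ℝ E = 2)]

theorem collinear_of_forall_inner_eq_s11 {z : E} (hz : z ≠ 0) {c : ℝ} {s : Set E}
    (hs : ∀ x ∈ s, ⟪x, z⟫ = c) : Collinear ℝ s := by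
  have : FiniteDimensional ℝ E := .of_fact_finrank_eq_two
  have hspan : vectorSpan ℝ s ≤ (ℝ ∙ z)ᗮ := by
    refine Submodule.span_le.2 ?_
    rintro _ ⟨x, hx, y, hy, rfl⟩
    show x -ᵥ y ∈ (ℝ ∙ z)ᗮ
    rw [Submodule.mem_orthogonal_singleton_iff_inner_left, vsub_eq_sub,
      inner_sub_left, hs x hx, hs y hy, sub_self]
  rw [collinear_iff_finrank_le_one]
  exact (Submodule.finrank_mono hspan).trans (Submodule.finrank_orthogonal_span_singleton hz).le

theorem inner_eq_zero_of_perp_of_perp {u v w w' : E} (hw : w ≠ 0) (hw' : w' ≠ 0)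
    (hww' : ⟪w, w'⟫ = 0) (hu : ⟪u, w⟫ = 0) (hv : ⟪v, w'⟫ = 0) : ⟪u, v⟫ = 0 := by
  obtain ⟨r, rfl⟩ := Submodule.mem_span_singleton.1 <|
    Submodule.mem_span_singleton_of_inner_eq_zero_of_inner_eq_zero hw hw'
      (by rwa [real_inner_comm]) hww'
  rw [real_inner_smul_left, real_inner_comm, hv, mul_zero]

theorem card_filter_le_two_of_dist_eq {ι : Type*} [Fintype ι] {a : ι → E}
    (hcol : NoThreeCollinear ℝ a) {p q : E} (hpq : p ≠ q) (P : ι → Prop) [DecidablePred P]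
    (hP : ∀ m, P m → dist (a m) p = dist (a m) q) : #{m | P m} ≤ 2 :=
  card_filter_le_two_of_collinear hcol P <|
    collinear_of_forall_inner_eq_s11 (sub_ne_zero.2 hpq.symm) fun _ ⟨m, hm, hx⟩ =>
      hx ▸ inner_sub_eq_of_dist_eq (hP m hm)

theorem eq_zero_of_forall_inner_eq {ι : Type*} [Fintype ι] {a : ι → E}
    (hcol : NoThreeCollinear ℝ a) (hι : 2 < Fintype.card ι) {z : E} {c : ℝ}
    (h : ∀ m, ⟪a m, z⟫ = c) : z = 0 ∧ c = 0 := by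
  have hz : z = 0 := by
    by_contra hz
    have := card_filter_le_two_of_collinear hcol (fun _ => True) <|
      collinear_of_forall_inner_eq_s11 hz (by rintro _ ⟨m, -, rfl⟩; exact h m)
    rw [filter_true, card_univ] at this
    omega
  obtain ⟨m⟩ : Nonempty ι := Fintype.card_pos_iff.1 (by omega)
  exact ⟨hz, by rw [← h m, hz, inner_zero_right]⟩

theorem inner_sub_sub_eq_zero_of_forall_dist_eq {ι : Type*} [Fintype ι] {a : ι → E}
    (hcol : NoThreeCollinear ℝ a) (hι : 2 < Fintype.card ι) {p₁ p₂ q₁ q₂ : E}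
    (hdist : ∀ m, (dist (a m) p₁ = dist (a m) q₁ ∧ dist (a m) p₂ = dist (a m) q₂) ∨
      (dist (a m) p₁ = dist (a m) q₂ ∧ dist (a m) p₂ = dist (a m) q₁)) :
    ⟪q₁ - p₁, q₁ - p₂⟫ = 0 := by
  have hline : ∀ m, ⟪a m, q₁ + q₂ - (p₁ + p₂)⟫ =
      (‖q₁‖ ^ 2 + ‖q₂‖ ^ 2 - (‖p₁‖ ^ 2 + ‖p₂‖ ^ 2)) / 2 := by
    intro m
    rcases hdist m with ⟨h₁, h₂⟩ | ⟨h₁, h₂⟩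
    · rw [add_sub_add_comm, inner_add_right, inner_sub_eq_of_dist_eq h₁,
        inner_sub_eq_of_dist_eq h₂]
      ring
    · rw [add_comm q₁, add_sub_add_comm, inner_add_right, inner_sub_eq_of_dist_eq h₁,
        inner_sub_eq_of_dist_eq h₂]
      ring
  obtain ⟨hsum, hnorm⟩ := eq_zero_of_forall_inner_eq hcol hι hline
  exact inner_sub_sub_eq_zero_of_add_eq_add (sub_eq_zero.1 hsum) (by linarith)

end InnerProductSpace

theorem exists_pairs_of_card_filter_le_two {ι : Type*} [Fintype ι] [DecidableEq ι]
    (hι : Fintype.card ι = 4) {P Q : ι → Prop} [DecidablePred P] [DecidablePred Q]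
    (hPQ : ∀ m, P m ∨ Q m) (hP : #{m | P m} ≤ 2) (hQ : #{m | Q m} ≤ 2) :
    ∃ i j k l : ι, ({i, j, k, l} : Finset ι) = univ ∧ P i ∧ P j ∧ Q k ∧ Q l := by
  have hQ' : ∀ m, ¬P m → Q m := fun m => (hPQ m).resolve_left
  have hnP : #{m | ¬P m} ≤ 2 := (card_le_card (monotone_filter_right _ fun m _ => hQ' m)).trans hQ
  have hsum : #{m | P m} + #{m | ¬P m} = 4 := by
    rw [card_filter_add_card_filter_not, card_univ, hι]
  obtain ⟨i, j, -, hij⟩ := card_eq_two.1 (show #{m | P m} = 2 by omega)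
  obtain ⟨k, l, -, hkl⟩ := card_eq_two.1 (show #{m | ¬P m} = 2 by omega)
  have hmemP : ∀ m, P m ↔ m = i ∨ m = j := fun m => by simpa using congrArg (m ∈ ·) hij
  have hmemnP : ∀ m, ¬P m ↔ m = k ∨ m = l := fun m => by simpa using congrArg (m ∈ ·) hkl
  refine ⟨i, j, k, l, ?_, (hmemP i).2 (.inl rfl), (hmemP j).2 (.inr rfl),
    hQ' k ((hmemnP k).2 (.inl rfl)), hQ' l ((hmemnP l).2 (.inr rfl))⟩
  rw [← filter_union_filter_not_eq P univ, hij, hkl, insert_union, singleton_union]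

theorem dist_eq_or_of_rangeSet_eq {a p₁ p₂ q₁ q₂ : Plane}
    (h : rangeSet a {p₁, p₂} = rangeSet a {q₁, q₂}) :
    (dist a p₁ = dist a q₁ ∧ dist a p₂ = dist a q₂) ∨
      (dist a p₁ = dist a q₂ ∧ dist a p₂ = dist a q₁) := by
  simpa only [rangeSet, Set.image_pair, Set.pair_eq_pair_iff] using h

theorem ghost_structure_two_targets_general (a : Fin 4 → Plane)
    (hcol : ∀ i j k : Fin 4, i ≠ j → i ≠ k → j ≠ k →
      ¬ Collinear ℝ ({a i, a j, a k} : Set Plane))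
    (p₁ p₂ q₁ q₂ : Plane)
    (hdisj : ({p₁, p₂} : Set Plane) ∩ ({q₁, q₂} : Set Plane) = ∅)
    (hranges : ∀ m : Fin 4,
      rangeSet (a m) ({p₁, p₂} : Set Plane) = rangeSet (a m) ({q₁, q₂} : Set Plane)) :
    ∃ r₁ r₂ : Plane, ({r₁, r₂} : Set Plane) = ({q₁, q₂} : Set Plane) ∧
      ∃ i j k l : Fin 4, ({i, j, k, l} : Finset (Fin 4)) = Finset.univ ∧
        (∀ t : Fin 4, t = i ∨ t = j →
          dist (a t) p₁ = dist (a t) r₁ ∧ dist (a t) p₂ = dist (a t) r₂) ∧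
        (∀ t : Fin 4, t = k ∨ t = l →
          dist (a t) p₁ = dist (a t) r₂ ∧ dist (a t) p₂ = dist (a t) r₁) ∧
        (inner ℝ (a j - a i) (a l - a k) : ℝ) = 0 := by
  have : Fact (finrank ℝ Plane = 2) := ⟨finrank_euclideanSpace_fin⟩
  obtain ⟨h₁₁, h₁₂, h₂₁⟩ : p₁ ≠ q₁ ∧ p₁ ≠ q₂ ∧ p₂ ≠ q₁ := by
    have hne := Set.disjoint_iff_forall_ne.1 (Set.disjoint_iff_inter_eq_empty.2 hdisj)
    exact ⟨hne (by simp) (by simp), hne (by simp) (by simp), hne (by simp) (by simp)⟩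
  have hdist := fun m => dist_eq_or_of_rangeSet_eq (hranges m)
  have hrect := inner_sub_sub_eq_zero_of_forall_dist_eq hcol (by simp) hdist
  obtain ⟨i, j, k, l, huniv, hi, hj, hk, hl⟩ := exists_pairs_of_card_filter_le_two
    (Fintype.card_fin 4) hdist (card_filter_le_two_of_dist_eq hcol h₁₁ _ fun _ h => h.1)
    (card_filter_le_two_of_dist_eq hcol h₁₂ _ fun _ h => h.1)
  refine ⟨q₁, q₂, rfl, i, j, k, l, huniv, ?_, ?_, ?_⟩
  · rintro t (rfl | rfl) <;> assumption
  · rintro t (rfl | rfl) <;> assumption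
  · exact inner_eq_zero_of_perp_of_perp (sub_ne_zero.2 h₁₁.symm) (sub_ne_zero.2 h₂₁.symm)
      hrect
      (inner_sub_sub_eq_zero_of_dist_eq_of_dist_eq hi.1 hj.1)
      (inner_sub_sub_eq_zero_of_dist_eq_of_dist_eq hk.2 hl.2)

/-- **Appendix B structural claim.** With `M = 4` BSs, no three of which are collinear, if
two disjoint two-element target sets `{p₁, p₂}` and `{q₁, q₂}` have the same range set at
every BS, then (after possibly swapping the labels of `q₁` and `q₂`, captured by `r₁, r₂`)
the BSs can be partitioned into two pairs `{i, j}` and `{k, l}` such that the BSs in the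
first pair match `p₁ ↔ r₁`, `p₂ ↔ r₂`, the BSs in the second pair match `p₁ ↔ r₂`,
`p₂ ↔ r₁`, and the line through `a i, a j` is perpendicular to the line through
`a k, a l`. -/
theorem ghost_structure_two_targets (a : Fin 4 → Plane)
    (hcol : ∀ i j k : Fin 4, i ≠ j → i ≠ k → j ≠ k →
      ¬ Collinear ℝ ({a i, a j, a k} : Set Plane))
    (p₁ p₂ q₁ q₂ : Plane) (hp : p₁ ≠ p₂) (hq : q₁ ≠ q₂)
    (hdisj : ({p₁, p₂} : Set Plane) ∩ ({q₁, q₂} : Set Plane) = ∅)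
    (hranges : ∀ m : Fin 4,
      rangeSet (a m) ({p₁, p₂} : Set Plane) = rangeSet (a m) ({q₁, q₂} : Set Plane)) :
    ∃ r₁ r₂ : Plane, ({r₁, r₂} : Set Plane) = ({q₁, q₂} : Set Plane) ∧
      ∃ i j k l : Fin 4, ({i, j, k, l} : Finset (Fin 4)) = Finset.univ ∧
        (∀ t : Fin 4, t = i ∨ t = j →
          dist (a t) p₁ = dist (a t) r₁ ∧ dist (a t) p₂ = dist (a t) r₂) ∧
        (∀ t : Fin 4, t = k ∨ t = l →
          dist (a t) p₁ = dist (a t) r₂ ∧ dist (a t) p₂ = dist (a t) r₁) ∧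
        (inner ℝ (a j - a i) (a l - a k) : ℝ) = 0 :=
  ghost_structure_two_targets_general a hcol p₁ p₂ q₁ q₂ hdisj hranges
end
end

section
/- Let p_1, p_2, q_1, q_2 ∈ ℝ² satisfy p_1 ≠ q_1, p_2 ≠ q_2, p_1 ≠ q_2, and p_2 ≠ q_1. Suppose L is a line that is simultaneously the perpendicular bisector of the segment [p_1, q_1] and of the segment [p_2, q_2], and L' is a line that is simultaneously the perpendicular bisector of the segment [p_1, q_2] and of the segment [p_2, q_1]. If L is perpendicular to L' and they intersect at the point O, then p_1 + p_2 = q_1 + q_2 = 2·O; that is, O is the common midpoint of the segments [p_1, p_2] and [q_1, q_2]. -/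
/-!
Reflection in the perpendicular bisector of `[p, q]` swaps `p` and `q`. The bisectors `L` of
`[p₁, q₁]` and `L'` of `[p₁, q₂]` (which is also that of `[p₂, q₁]`) both pass through `O`, and
in the plane their directions, the orthogonal complements of the perpendicular vectors
`q₁ - p₁` and `q₂ - p₁`, are orthogonal complements of each other. Hence reflecting in `L'` is
reflecting in `L` followed by the half-turn about `O`. Applied to `p₁` this gives
`q₂ = 2O - q₁`, and applied to `q₁` it gives `p₂ = 2O - p₁`.
-/

noncomputable section

open EuclideanGeometry AffineSubspace Module

theorem Submodule.orthogonal_span_singleton_eq_span_singleton {𝕜 E : Type*} [RCLike 𝕜]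
    [NormedAddCommGroup E] [InnerProductSpace 𝕜 E] [Fact (finrank 𝕜 E = 2)] {u v : E}
    (hu : u ≠ 0) (hv : v ≠ 0) (huv : inner 𝕜 u v = 0) :
    (𝕜 ∙ v)ᗮ = 𝕜 ∙ u := by
  have : FiniteDimensional 𝕜 E := .of_fact_finrank_eq_succ 1
  refine (Submodule.eq_of_le_of_finrank_eq ?_ ?_).symm
  · rwa [Submodule.span_singleton_le_iff_mem, Submodule.mem_orthogonal_singleton_iff_inner_left]
  · rw [finrank_span_singleton hu, finrank_orthogonal_span_singleton (n := 1) hv]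

theorem add_eq_two_smul_of_pointReflection_eq {V : Type*} [AddCommGroup V] [Module ℝ V]
    {O a b : V} (h : Equiv.pointReflection O a = b) : a + b = (2 : ℝ) • O := by
  rw [← h, Equiv.pointReflection_apply, vsub_eq_sub, vadd_eq_add, two_smul]
  abel

section

variable {V P : Type*} [NormedAddCommGroup V] [InnerProductSpace ℝ V] [MetricSpace P]
  [NormedAddTorsor V P]

instance AffineSubspace.nonempty_perpBisector (p q : P) : Nonempty (perpBisector p q) :=
  perpBisector_nonempty.to_subtype

theorem AffineSubspace.perpBisector_eq_of_dist_eq_iff {p₁ q₁ p₂ q₂ : P}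
    (h : ∀ x, dist x p₁ = dist x q₁ ↔ dist x p₂ = dist x q₂) :
    perpBisector p₁ q₁ = perpBisector p₂ q₂ :=
  SetLike.ext fun x => by simpa only [mem_perpBisector_iff_dist_eq] using h x

namespace EuclideanGeometry

theorem reflection_perpBisector_left (p q : P)
    [(perpBisector p q).direction.HasOrthogonalProjection] :
    reflection (perpBisector p q) p = q := by
  have hv : p -ᵥ midpoint ℝ p q ∈ (perpBisector p q).directionᗮ := by
    rw [direction_perpBisector]
    apply Submodule.le_orthogonal_orthogonal
    rw [left_vsub_midpoint]
    exact Submodule.smul_mem _ _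
      (Submodule.mem_span_singleton.2 ⟨-1, by rw [neg_one_smul, neg_vsub_eq_vsub_rev]⟩)
  have := reflection_orthogonal_vadd (midpoint_mem_perpBisector p q) hv
  rwa [vsub_vadd, neg_vsub_eq_vsub_rev, midpoint_vsub_left, ← right_vsub_midpoint,
    vsub_vadd] at this

theorem reflection_perpBisector_right (p q : P)
    [(perpBisector p q).direction.HasOrthogonalProjection] :
    reflection (perpBisector p q) q = p := by
  simpa only [reflection_perpBisector_left] using reflection_reflection (perpBisector p q) p

theorem reflection_eq_pointReflection_reflection {s s' : AffineSubspace ℝ P} [Nonempty s]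
    [Nonempty s'] [s.direction.HasOrthogonalProjection] [s'.direction.HasOrthogonalProjection]
    {O : P} (hO : O ∈ s) (hO' : O ∈ s') (h : s'.direction = s.directionᗮ) (x : P) :
    reflection s' x = Equiv.pointReflection O (reflection s x) := by
  rw [reflection_apply_of_mem s' x hO', reflection_apply_of_mem s x hO,
    Equiv.pointReflection_apply, vsub_vadd_eq_vsub_sub, vsub_self, zero_sub,
    ← Submodule.reflection_orthogonal_apply]
  congr

end EuclideanGeometry

end

theorem perpendicular_bisectors_midpoint_general (p₁ p₂ q₁ q₂ O : Plane)
    (h₁₁ : p₁ ≠ q₁) (h₁₂ : p₁ ≠ q₂)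
    (hL' : ∀ x : Plane, dist x p₁ = dist x q₂ ↔ dist x p₂ = dist x q₁)
    (hperp : (inner ℝ (q₁ - p₁) (q₂ - p₁) : ℝ) = 0)
    (hO_L : dist O p₁ = dist O q₁)
    (hO_L' : dist O p₁ = dist O q₂) :
    p₁ + p₂ = (2 : ℝ) • O ∧ q₁ + q₂ = (2 : ℝ) • O := by
  have : Fact (finrank ℝ Plane = 2) := ⟨finrank_euclideanSpace_fin⟩
  have hdir : (perpBisector p₁ q₂).direction = (perpBisector p₁ q₁).directionᗮ := by
    rw [direction_perpBisector, direction_perpBisector, Submodule.orthogonal_orthogonal]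
    exact Submodule.orthogonal_span_singleton_eq_span_singleton (sub_ne_zero.2 h₁₁.symm)
      (sub_ne_zero.2 h₁₂.symm) hperp
  have hhalfTurn := reflection_eq_pointReflection_reflection
    (mem_perpBisector_iff_dist_eq.2 hO_L) (mem_perpBisector_iff_dist_eq.2 hO_L') hdir
  constructor
  · apply add_eq_two_smul_of_pointReflection_eq
    have := hhalfTurn q₁
    rwa [eq_reflection_of_eq_subspace (perpBisector_eq_of_dist_eq_iff hL'),
      reflection_perpBisector_right, reflection_perpBisector_right, eq_comm] at this
  · apply add_eq_two_smul_of_pointReflection_eq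
    have := hhalfTurn p₁
    rwa [reflection_perpBisector_left, reflection_perpBisector_left, eq_comm] at this

/-- **Rectangle midpoint fact of Appendix B.** Suppose the perpendicular bisector of
`[p₁, q₁]` coincides (as a set of points, characterized by equal distances) with the
perpendicular bisector of `[p₂, q₂]`, giving a line `L`, and the perpendicular bisector of
`[p₁, q₂]` coincides with that of `[p₂, q₁]`, giving a line `L'`. If `L ⟂ L'` (their normal
directions `q₁ - p₁` and `q₂ - p₁` are perpendicular) and `O` lies on both lines, then
`p₁ + p₂ = q₁ + q₂ = 2 • O`, i.e. `O` is the common midpoint of `[p₁, p₂]` and `[q₁, q₂]`. -/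
theorem perpendicular_bisectors_midpoint (p₁ p₂ q₁ q₂ O : Plane)
    (h₁₁ : p₁ ≠ q₁) (h₂₂ : p₂ ≠ q₂) (h₁₂ : p₁ ≠ q₂) (h₂₁ : p₂ ≠ q₁)
    (hL : ∀ x : Plane, dist x p₁ = dist x q₁ ↔ dist x p₂ = dist x q₂)
    (hL' : ∀ x : Plane, dist x p₁ = dist x q₂ ↔ dist x p₂ = dist x q₁)
    (hperp : (inner ℝ (q₁ - p₁) (q₂ - p₁) : ℝ) = 0)
    (hO_L : dist O p₁ = dist O q₁)
    (hO_L' : dist O p₁ = dist O q₂) :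
    p₁ + p₂ = (2 : ℝ) • O ∧ q₁ + q₂ = (2 : ℝ) • O :=
  perpendicular_bisectors_midpoint_general p₁ p₂ q₁ q₂ O h₁₁ h₁₂ hL' hperp hO_L hO_L'
end
end

section
/- There exist three non-collinear points a_1, a_2, a_3 ∈ ℝ² and two distinct 2-element sets X, X^G ⊆ ℝ² such that D_m(X) = D_m(X^G) for m = 1, 2, 3; that is, with only M = 3 BSs, ghost configurations can exist. A concrete witness: a_1 = (0, 3), a_2 = (5, 0), a_3 = (0, −4), X = {(2, −2), (−2, 2)}, and X^G = {(−2, −2), (2, 2)}. -/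
/-!
The ghost `X^G` is the mirror image of `X` in the `y`-axis and, at the same time, its mirror image
in the `x`-axis. A reflection is an isometry, so a BS on the mirror line sees the mirrored targets
at the same distances as the original ones. Putting `a₁` and `a₃` on the `y`-axis and `a₂` on the
`x`-axis makes the three BSs non-collinear while none of them can tell `X` from `X^G`.
-/

noncomputable section

theorem rangeSet_image_of_isometry {f : Plane → Plane} (hf : Isometry f) {a : Plane}
    (ha : f a = a) (X : Set Plane) : rangeSet a (f '' X) = rangeSet a X := by
  rw [rangeSet, rangeSet, Set.image_image]
  refine Set.image_congr fun p _ => ?_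
  rw [← hf.dist_eq a p, ha]

theorem not_collinear_of_notMem_affineSubspace {k V P : Type*} [Field k] [AddCommGroup V]
    [Module k V] [AddTorsor V P] {s : AffineSubspace k P} {a b c : P} (ha : a ∈ s) (hc : c ∈ s)
    (hb : b ∉ s) (hac : a ≠ c) : ¬Collinear k ({a, b, c} : Set P) := fun h =>
  hb <| affineSpan_pair_le_of_mem_of_mem ha hc <|
    h.mem_affineSpan_of_mem_of_ne (by simp) (by simp) (by simp) hac

section CoordReflection

variable {ι : Type*} [Fintype ι] [DecidableEq ι]

def coordReflection (i : ι) : EuclideanSpace ℝ ι ≃ₗᵢ[ℝ] EuclideanSpace ℝ ι :=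
  LinearIsometryEquiv.piLpCongrRight 2 fun j =>
    if j = i then LinearIsometryEquiv.neg ℝ else LinearIsometryEquiv.refl ℝ ℝ

theorem coordReflection_apply (i j : ι) (p : EuclideanSpace ℝ ι) :
    coordReflection i p j = if j = i then -p j else p j := by
  unfold coordReflection
  split_ifs <;> simp [*]

theorem coordReflection_eq_self (i : ι) {p : EuclideanSpace ℝ ι} (hp : p i = 0) :
    coordReflection i p = p := by
  ext j
  rw [coordReflection_apply]
  split_ifs with h <;> simp [h, hp]

end CoordReflection

theorem coordReflection_zero_vec2 (x y : ℝ) : coordReflection 0 !₂[x, y] = !₂[-x, y] := by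
  ext j; fin_cases j <;> simp [coordReflection_apply]

theorem coordReflection_one_vec2 (x y : ℝ) : coordReflection 1 !₂[x, y] = !₂[x, -y] := by
  ext j; fin_cases j <;> simp [coordReflection_apply]

/-- **Example 1.** With only `M = 3` BSs, ghost configurations can exist: there are three
non-collinear BS positions and two distinct two-element target sets with the same range
set at every BS. A concrete witness: `a₁ = (0,3)`, `a₂ = (5,0)`, `a₃ = (0,-4)`,
`X = {(2,-2), (-2,2)}`, `X^G = {(-2,-2), (2,2)}`. -/
theorem ghost_exists_with_three_BS :
    ∃ (a₁ a₂ a₃ : Plane) (X XG : Set Plane),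
      ¬ Collinear ℝ ({a₁, a₂, a₃} : Set Plane) ∧
      X.Finite ∧ X.ncard = 2 ∧ XG.Finite ∧ XG.ncard = 2 ∧ XG ≠ X ∧
      rangeSet a₁ XG = rangeSet a₁ X ∧
      rangeSet a₂ XG = rangeSet a₂ X ∧
      rangeSet a₃ XG = rangeSet a₃ X := by
  set X : Set Plane := {!₂[2, -2], !₂[-2, 2]}
  set XG : Set Plane := {!₂[-2, -2], !₂[2, 2]}
  have hXG₀ : coordReflection 0 '' X = XG := by
    simp [X, XG, Set.image_pair, coordReflection_zero_vec2]
  have hXG₁ : coordReflection 1 '' X = XG := by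
    simp [X, XG, Set.image_pair, coordReflection_one_vec2, Set.pair_comm]
  have hyAxis : ∀ y : ℝ, rangeSet !₂[0, y] XG = rangeSet !₂[0, y] X := fun _ =>
    hXG₀ ▸ rangeSet_image_of_isometry (coordReflection 0).isometry
      (coordReflection_eq_self 0 (by simp)) X
  have hxAxis : ∀ x : ℝ, rangeSet !₂[x, 0] XG = rangeSet !₂[x, 0] X := fun _ =>
    hXG₁ ▸ rangeSet_image_of_isometry (coordReflection 1).isometry
      (coordReflection_eq_self 1 (by simp)) X
  refine ⟨!₂[0, 3], !₂[5, 0], !₂[0, -4], X, XG, ?_, X.toFinite, ?_, XG.toFinite, ?_, ?_,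
    hyAxis 3, hxAxis 5, hyAxis (-4)⟩
  · let yAxis : AffineSubspace ℝ Plane :=
      (LinearMap.ker (EuclideanSpace.proj 0 : Plane →L[ℝ] ℝ).toLinearMap).toAffineSubspace
    exact not_collinear_of_notMem_affineSubspace (s := yAxis) (by simp [yAxis])
      (by simp [yAxis]) (by simp [yAxis]) (by norm_num)
  · exact Set.ncard_pair (by norm_num)
  · exact Set.ncard_pair (by norm_num)
  · intro h
    have : !₂[(2 : ℝ), -2] ∈ XG := h ▸ Set.mem_insert _ _
    norm_num [XG] at this
end
end
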